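/- arXiv:2603.14262 — 11 statements merged into one kernel-verified Lean document; each statement's English description precedes it below -/
import Mathlib

section
/- For integers m ≥ 1, k ≥ 2, and n ≥ 1, the number of monomials x_1^{e_1} ⋯ x_n^{e_n} such that (i) each exponent e_i can be written as e_i = (m+1)·l_i + r_i with l_i ≥ 0 and 0 ≤ r_i ≤ m, (ii) l_1 + ⋯ + l_n < k, and (iii) e_1 + ⋯ + e_n ≤ mn + (m+1)(k-1) − 1, equals ((m+1)^n − 1)·C(n+k-1, n) + C(n+k-2, n). -/
/-! Writing each exponent as `e i = (m + 1) * l i + r i` with `r i ≤ m` is a bijection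
`(l, r) ↦ e`, so the monomials are counted by pairs `(l, r)` with `∑ l < k`. Since `∑ r ≤ m n`,
the degree bound `∑ e ≤ m n + (m + 1)(k - 1) - 1` fails only when `∑ l = k - 1` and every
`r i = m`. Hence the count is `(m + 1)^n M_k(n) - #{l | ∑ l = k - 1} = (m + 1)^n M_k(n) -
(M_k(n) - M_{k-1}(n))`, where `M_k(n) = #{l | ∑ l ≤ k - 1} = C(n + k - 1, n)` is computed by
adding a slack coordinate and counting multisets. -/

open Finset

def piDivModEquiv (ι : Type*) (b : ℕ) [NeZero b] : (ι → ℕ) × (ι → Fin b) ≃ (ι → ℕ) :=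
  (Equiv.arrowProdEquivProdArrow ι _ _).symm.trans
    (Equiv.piCongrRight fun _ => (Nat.divModEquiv b).symm)

@[simp]
theorem piDivModEquiv_apply {ι : Type*} {b : ℕ} [NeZero b] (p : (ι → ℕ) × (ι → Fin b)) (i : ι) :
    piDivModEquiv ι b p i = b * p.1 i + p.2 i := by
  simp [piDivModEquiv, mul_comm]

theorem sum_piDivModEquiv {ι : Type*} [Fintype ι] {b : ℕ} [NeZero b] (p : (ι → ℕ) × (ι → Fin b)) :
    ∑ i, piDivModEquiv ι b p i = b * ∑ i, p.1 i + ∑ i, (p.2 i : ℕ) := by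
  simp [sum_add_distrib, mul_sum]

section SumVal

variable {ι : Type*} [Fintype ι] {m : ℕ}

theorem sum_val_le_mul_card (r : ι → Fin (m + 1)) : ∑ i, (r i : ℕ) ≤ m * Fintype.card ι := by
  simpa [mul_comm] using sum_le_sum (s := univ) fun i _ => Fin.is_le (r i)

theorem sum_val_eq_mul_card_iff (r : ι → Fin (m + 1)) :
    ∑ i, (r i : ℕ) = m * Fintype.card ι ↔ r = fun _ => Fin.last m := by
  have h := sum_eq_sum_iff_of_le (s := univ) (g := fun _ => m) fun i _ => Fin.is_le (r i)
  simp only [sum_const, card_univ, smul_eq_mul, mem_univ, forall_const] at h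
  rw [mul_comm, h, funext_iff]
  simp [Fin.ext_iff]

end SumVal

theorem finite_setOf_sum_le (n s : ℕ) : {l : Fin n → ℕ | ∑ i, l i ≤ s}.Finite :=
  (Set.finite_Iic fun _ => s).subset fun _ hl i =>
    (single_le_sum (fun _ _ => Nat.zero_le _) (mem_univ i)).trans hl

def sumLeEquivSumEq (n s : ℕ) :
    {l : Fin n → ℕ // ∑ i, l i ≤ s} ≃ {l : Fin (n + 1) → ℕ // ∑ i, l i = s} where
  toFun l := ⟨Fin.cons (s - ∑ i, l.1 i) l.1, by
    simp [Fin.sum_univ_succ, Nat.sub_add_cancel l.2]⟩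
  invFun l := ⟨Fin.tail l.1, by
    have := l.2; rw [Fin.sum_univ_succ] at this; simp only [Fin.tail]; omega⟩
  left_inv _ := rfl
  right_inv l := by
    have hl := l.2
    rw [Fin.sum_univ_succ] at hl
    have h0 : s - ∑ i, Fin.tail l.1 i = l.1 0 := by simp only [Fin.tail]; omega
    exact Subtype.ext (by simp only [h0, Fin.cons_self_tail])

theorem ncard_setOf_sum_le (n s : ℕ) : {l : Fin n → ℕ | ∑ i, l i ≤ s}.ncard = (n + s).choose n := by
  rw [← Nat.card_coe_set_eq, Set.coe_ofPred,
    Nat.card_congr ((sumLeEquivSumEq n s).trans (Sym.equivNatSumOfFintype (Fin (n + 1)) s).symm),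
    Nat.card_eq_fintype_card, Sym.card_sym_eq_choose, Fintype.card_fin, Nat.add_right_comm,
    Nat.add_sub_cancel, Nat.choose_symm_add]

theorem ncard_setOf_sum_eq_succ (n s : ℕ) :
    {l : Fin n → ℕ | ∑ i, l i = s + 1}.ncard = (n + s + 1).choose n - (n + s).choose n := by
  have hsub : {l : Fin n → ℕ | ∑ i, l i ≤ s} ⊆ {l | ∑ i, l i ≤ s + 1} := fun l hl => by
    simp only [Set.mem_ofPred_eq] at hl ⊢; omega
  have hdiff :
      {l : Fin n → ℕ | ∑ i, l i ≤ s + 1} \ {l | ∑ i, l i ≤ s} = {l | ∑ i, l i = s + 1} := by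
    ext l; simp only [Set.mem_sdiff, Set.mem_ofPred_eq]; omega
  rw [← hdiff, Set.ncard_sdiff hsub (finite_setOf_sum_le n s), ncard_setOf_sum_le,
    ncard_setOf_sum_le, Nat.add_assoc]

/-- `2 ≤ k` keeps the `- 1` on the right from being truncated. -/
theorem mul_add_le_bound_iff {m N L R k : ℕ} (hk : 2 ≤ k) (hL : L < k) (hR : R ≤ N) :
    (m + 1) * L + R ≤ N + (m + 1) * (k - 1) - 1 ↔ ¬(L = k - 1 ∧ R = N) := by
  obtain ⟨j, rfl⟩ := Nat.exists_eq_add_of_le' hk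
  rw [show j + 2 - 1 = j + 1 from rfl]
  rcases Nat.lt_succ_iff_lt_or_eq.mp hL with hL | rfl
  · have : (m + 1) * L ≤ (m + 1) * j := Nat.mul_le_mul_left _ (by omega)
    have : (m + 1) * (j + 1) = (m + 1) * j + m + 1 := by ring
    omega
  · have : 0 < (m + 1) * (j + 1) := by positivity
    omega

theorem mul_sub_sub_eq {a b P : ℕ} (hP : 1 ≤ P) (hb : b ≤ a) :
    a * P - (a - b) = (P - 1) * a + b := by
  obtain ⟨q, rfl⟩ := Nat.exists_eq_add_of_le' hP
  rw [Nat.add_sub_cancel, mul_add_one, mul_comm]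
  omega

theorem sum_piDivModEquiv_le_iff {m n k : ℕ} (hk : 2 ≤ k) {p : (Fin n → ℕ) × (Fin n → Fin (m + 1))}
    (hp : ∑ i, p.1 i < k) :
    ∑ i, piDivModEquiv (Fin n) (m + 1) p i ≤ m * n + (m + 1) * (k - 1) - 1 ↔
      ¬(∑ i, p.1 i = k - 1 ∧ p.2 = fun _ => Fin.last m) := by
  have hr : ∑ i, (p.2 i : ℕ) ≤ m * n := by simpa using sum_val_le_mul_card p.2
  have hr_eq : ∑ i, (p.2 i : ℕ) = m * n ↔ p.2 = fun _ => Fin.last m := by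
    simpa using sum_val_eq_mul_card_iff p.2
  rw [sum_piDivModEquiv, mul_add_le_bound_iff hk hp hr, hr_eq]

theorem setOf_eq_image_piDivModEquiv (m n k : ℕ) (hk : 2 ≤ k) :
    {e : Fin n → ℕ |
        (∃ l r : Fin n → ℕ, (∀ i, r i ≤ m ∧ e i = (m + 1) * l i + r i) ∧ ∑ i, l i < k) ∧
        ∑ i, e i ≤ m * n + (m + 1) * (k - 1) - 1} =
      piDivModEquiv (Fin n) (m + 1) ''
        ({l | ∑ i, l i < k} ×ˢ Set.univ \ {l | ∑ i, l i = k - 1} ×ˢ {fun _ => Fin.last m}) := by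
  ext e
  constructor
  · rintro ⟨⟨l, r, hlr, hl⟩, he⟩
    let p : (Fin n → ℕ) × (Fin n → Fin (m + 1)) := (l, fun i => ⟨r i, Nat.lt_succ_of_le (hlr i).1⟩)
    have hp : piDivModEquiv (Fin n) (m + 1) p = e := funext fun i => by simp [p, (hlr i).2]
    refine ⟨p, ⟨⟨hl, trivial⟩, ?_⟩, hp⟩
    rw [← hp, sum_piDivModEquiv_le_iff hk hl] at he
    simpa using he
  · rintro ⟨⟨l, r⟩, ⟨⟨hl, -⟩, hlr⟩, rfl⟩
    refine ⟨⟨l, fun i => r i, fun i => ⟨Fin.is_le (r i), by simp⟩, hl⟩, ?_⟩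
    rw [sum_piDivModEquiv_le_iff hk hl]
    simpa using hlr

theorem stmt0_general (m k n : ℕ) (hk : 2 ≤ k) :
    Set.ncard {e : Fin n → ℕ |
        (∃ l r : Fin n → ℕ, (∀ i, r i ≤ m ∧ e i = (m + 1) * l i + r i) ∧ ∑ i, l i < k) ∧
        ∑ i, e i ≤ m * n + (m + 1) * (k - 1) - 1} =
      ((m + 1) ^ n - 1) * Nat.choose (n + k - 1) n + Nat.choose (n + k - 2) n := by
  obtain ⟨j, rfl⟩ := Nat.exists_eq_add_of_le' hk
  have hsub : {l : Fin n → ℕ | ∑ i, l i = j + 1} ×ˢ {fun _ : Fin n => Fin.last m} ⊆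
      {l | ∑ i, l i ≤ j + 1} ×ˢ Set.univ :=
    fun _ ⟨hl, _⟩ => ⟨le_of_eq hl, trivial⟩
  have hfin : ({l : Fin n → ℕ | ∑ i, l i = j + 1} ×ˢ {fun _ : Fin n => Fin.last m}).Finite :=
    ((finite_setOf_sum_le n (j + 1)).subset fun _ => le_of_eq).prod (Set.finite_singleton _)
  simp_rw [setOf_eq_image_piDivModEquiv m n _ hk, Nat.lt_succ_iff]
  rw [show j + 2 - 1 = j + 1 from rfl, Set.ncard_image_of_injective _ (Equiv.injective _),
    Set.ncard_sdiff hsub hfin,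
    Set.ncard_prod, Set.ncard_prod, Set.ncard_univ, Set.ncard_singleton, ncard_setOf_sum_le,
    ncard_setOf_sum_eq_succ, Nat.card_eq_fintype_card, Fintype.card_fun, Fintype.card_fin,
    Fintype.card_fin, show n + (j + 2) - 2 = n + j by omega,
    show n + (j + 2) - 1 = n + j + 1 by omega, ← Nat.add_assoc, mul_one,
    mul_sub_sub_eq (Nat.one_le_pow _ _ m.succ_pos) (Nat.choose_le_choose n (Nat.le_succ _))]

/-- the number of monomials (exponent vectors) `e : Fin n → ℕ` such that
each `e i = (m+1) * l i + r i` with `r i ≤ m`, `∑ l i < k`, and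
`∑ e i ≤ m*n + (m+1)*(k-1) - 1`, equals `((m+1)^n - 1) * C(n+k-1, n) + C(n+k-2, n)`. -/
theorem stmt0 (m k n : ℕ) (hm : 1 ≤ m) (hk : 2 ≤ k) (hn : 1 ≤ n) :
    Set.ncard {e : Fin n → ℕ |
        (∃ l r : Fin n → ℕ, (∀ i, r i ≤ m ∧ e i = (m + 1) * l i + r i) ∧ ∑ i, l i < k) ∧
        ∑ i, e i ≤ m * n + (m + 1) * (k - 1) - 1} =
      ((m + 1) ^ n - 1) * Nat.choose (n + k - 1) n + Nat.choose (n + k - 2) n :=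
  stmt0_general m k n hk
end

section
/- Let m ≥ 1, k ≥ 2, n ≥ k−1. For non-negative integers d, l_1, …, l_n with d + (m+1)(l_1+⋯+l_n) = (m+1)(k−1) − 1, consider the polynomials Q_{d,l_1,…,l_n} = (x_1^{l_1} ⋯ x_n^{l_n})^{m+1} · (x_1^d + ⋯ + x_n^d) in ℝ[x_1,…,x_n]. Then the collection of all such polynomials (over all valid tuples (d, l_1, …, l_n)) is linearly independent over ℝ. -/
open MvPolynomial

/-- product of powers of variables as a monomial -/
lemma aux_prod_X_pow {n : ℕ} {R : Type*} [CommSemiring R] (l : Fin n → ℕ) :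
    (∏ i, (X i : MvPolynomial (Fin n) R) ^ l i) =
      monomial (Finsupp.equivFunOnFinite.symm l) 1 := by
  rw [← prod_X_pow_eq_monomial]
  refine (Finset.prod_subset (Finset.subset_univ _) ?_).symm
  intro x _ hx
  have h0 : l x = 0 := by simpa using Finsupp.notMem_support_iff.mp hx
  rw [h0, pow_zero]

/-- the exponent vector `(m+1)·l + d·e_j` -/
noncomputable def Wvec {n : ℕ} (m : ℕ) (l : Fin n → ℕ) (j : Fin n) (d : ℕ) : Fin n →₀ ℕ :=
  (m + 1) • Finsupp.equivFunOnFinite.symm l + Finsupp.single j d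

lemma Wvec_apply {n : ℕ} (m : ℕ) (l : Fin n → ℕ) (j : Fin n) (d : ℕ) (t : Fin n) :
    Wvec m l j d t = (m + 1) * l t + if j = t then d else 0 := by
  simp [Wvec, Finsupp.single_apply]

lemma Q_eq {n m d : ℕ} {R : Type*} [CommSemiring R] (l : Fin n → ℕ) :
    ((∏ i, (X i : MvPolynomial (Fin n) R) ^ l i) ^ (m + 1)) *
      ∑ i, (X i : MvPolynomial (Fin n) R) ^ d = ∑ j, monomial (Wvec m l j d) 1 := by
  rw [aux_prod_X_pow, monomial_pow, one_pow, Finset.mul_sum]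
  refine Finset.sum_congr rfl fun j _ => ?_
  rw [X_pow_eq_monomial, monomial_mul, one_mul]
  rfl

lemma not_dvd_d {n m k d : ℕ} (hm : 1 ≤ m) (hk : 2 ≤ k) {l : Fin n → ℕ}
    (hp : d + (m + 1) * ∑ t, l t = (m + 1) * (k - 1) - 1) : ¬ (m + 1) ∣ d := by
  intro ⟨a, ha⟩
  have h2 : 2 * 1 ≤ (m + 1) * (k - 1) := Nat.mul_le_mul (by omega) (by omega)
  have heq : (m + 1) * a + (m + 1) * ∑ t, l t + 1 = (m + 1) * (k - 1) := by omega
  have hdvd : (m + 1) ∣ 1 := by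
    have h3 := Nat.dvd_sub (dvd_mul_right (m + 1) (k - 1))
      (Dvd.dvd.add (dvd_mul_right (m + 1) a) (dvd_mul_right (m + 1) (∑ t, l t)))
    rwa [show (m + 1) * (k - 1) - ((m + 1) * a + (m + 1) * ∑ t, l t) = 1 from by omega] at h3
  have := Nat.le_of_dvd one_pos hdvd
  omega

lemma key {n m k : ℕ} (hm : 1 ≤ m) (hk : 2 ≤ k)
    {d d' : ℕ} {l l' : Fin n → ℕ} {i j : Fin n}
    (hq : d' + (m + 1) * ∑ t, l' t = (m + 1) * (k - 1) - 1)
    (hp : d + (m + 1) * ∑ t, l t = (m + 1) * (k - 1) - 1)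
    (hli : l i = 0)
    (hw : Wvec m l' j d' = Wvec m l i d) :
    j = i ∧ d' ≤ d ∧ (d' = d → l' = l) := by
  have h1 : ∀ t, (m + 1) * l' t + (if j = t then d' else 0)
      = (m + 1) * l t + (if i = t then d else 0) := by
    intro t
    rw [← Wvec_apply, ← Wvec_apply, hw]
  have hnd : ¬ (m + 1) ∣ d := not_dvd_d hm hk hp
  have hji : j = i := by
    by_contra hji
    have := h1 i
    rw [if_neg hji, if_pos rfl, hli] at this
    exact hnd ⟨l' i, by omega⟩
  subst hji
  have h2 := h1 j
  rw [if_pos rfl, if_pos rfl, hli] at h2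
  refine ⟨rfl, by omega, fun hdd => ?_⟩
  have hji0 : l' j = 0 := by
    have h4 : (m + 1) * l' j = 0 := by omega
    rcases Nat.mul_eq_zero.mp h4 with h | h
    · omega
    · exact h
  funext t
  by_cases ht : j = t
  · rw [← ht, hji0, hli]
  · have := h1 t
    rw [if_neg ht, if_neg ht] at this
    have h5 : (m + 1) * l' t = (m + 1) * l t := by omega
    exact Nat.eq_of_mul_eq_mul_left (by omega) h5

lemma exists_zero {n m k : ℕ} (hm : 1 ≤ m) (hk : 2 ≤ k) (hn : k - 1 ≤ n) {d : ℕ}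
    {l : Fin n → ℕ} (hp : d + (m + 1) * ∑ t, l t = (m + 1) * (k - 1) - 1) :
    ∃ i, l i = 0 := by
  by_contra h
  push_neg at h
  have hsum : n ≤ ∑ t, l t := by
    calc n = ∑ _t : Fin n, 1 := by simp
    _ ≤ ∑ t, l t := Finset.sum_le_sum fun t _ => Nat.one_le_iff_ne_zero.2 (h t)
  have h3 : (m + 1) * (k - 1) ≤ (m + 1) * ∑ t, l t :=
    Nat.mul_le_mul_left _ (le_trans hn hsum)
  have h2 : 1 ≤ (m + 1) * (k - 1) :=
    Nat.one_le_iff_ne_zero.2 (Nat.mul_ne_zero (by omega) (by omega))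
  omega

/-- the polynomials
`Q_{d,l} = (∏ i, x_i^{l_i})^{m+1} * (x_1^d + ⋯ + x_n^d)` over all tuples `(d, l₁,…,lₙ)`
of non-negative integers with `d + (m+1)(l₁+⋯+lₙ) = (m+1)(k-1) - 1`
are linearly independent over ℝ. -/
theorem stmt1 (m k n : ℕ) (hm : 1 ≤ m) (hk : 2 ≤ k) (hn : k - 1 ≤ n) :
    LinearIndependent ℝ
      (fun p : {p : ℕ × (Fin n → ℕ) // p.1 + (m + 1) * ∑ i, p.2 i = (m + 1) * (k - 1) - 1} =>
        ((∏ i, (X i : MvPolynomial (Fin n) ℝ) ^ (p.1.2 i)) ^ (m + 1)) *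
          ∑ i, (X i : MvPolynomial (Fin n) ℝ) ^ p.1.1) := by
  classical
  rw [linearIndependent_iff']
  intro s g hsum
  suffices H : ∀ d (p : {p : ℕ × (Fin n → ℕ) //
      p.1 + (m + 1) * ∑ i, p.2 i = (m + 1) * (k - 1) - 1}), p ∈ s → p.1.1 = d → g p = 0 by
    intro p hp; exact H p.1.1 p hp rfl
  intro d
  induction d using Nat.strong_induction_on with
  | _ d IH =>
    intro p hp hd
    obtain ⟨i, hi⟩ := exists_zero hm hk hn p.2
    have hco : ∑ q ∈ s, g q *
        ∑ j, (if Wvec m q.1.2 j q.1.1 = Wvec m p.1.2 i p.1.1 then (1:ℝ) else 0) = 0 := by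
      have hc2 : coeff (Wvec m p.1.2 i p.1.1)
          (∑ q ∈ s, g q • ((∏ t, (X t : MvPolynomial (Fin n) ℝ) ^ (q.1.2 t)) ^ (m + 1) *
            ∑ t, (X t : MvPolynomial (Fin n) ℝ) ^ q.1.1)) = ∑ q ∈ s, g q *
          ∑ j, (if Wvec m q.1.2 j q.1.1 = Wvec m p.1.2 i p.1.1 then (1:ℝ) else 0) := by
        rw [coeff_sum]
        refine Finset.sum_congr rfl fun q _ => ?_
        rw [coeff_smul, Q_eq, coeff_sum, smul_eq_mul]
        refine congrArg (g q * ·) ?_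
        exact Finset.sum_congr rfl fun j _ => by rw [coeff_monomial]
      rw [hsum, coeff_zero] at hc2
      exact hc2.symm
    have hrest : ∀ q ∈ s.erase p, g q *
        (∑ j, if Wvec m q.1.2 j q.1.1 = Wvec m p.1.2 i p.1.1 then (1:ℝ) else 0) = 0 := by
      intro q hq
      rcases Finset.mem_erase.mp hq with ⟨hqp, hqs⟩
      by_cases hc : ∃ j, Wvec m q.1.2 j q.1.1 = Wvec m p.1.2 i p.1.1
      · obtain ⟨j, hj⟩ := hc
        obtain ⟨hji, hle, heq⟩ := key hm hk q.2 p.2 hi hj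
        have hlt : q.1.1 < p.1.1 := by
          rcases lt_or_eq_of_le hle with h | h
          · exact h
          · exact absurd (Subtype.ext (Prod.ext h (heq h))) hqp
        rw [IH q.1.1 (hd ▸ hlt) q hqs rfl, zero_mul]
      · push_neg at hc
        rw [Finset.sum_eq_zero fun j _ => by rw [if_neg (hc j)], mul_zero]
    rw [← Finset.add_sum_erase s _ hp, Finset.sum_eq_zero hrest, add_zero] at hco
    have hone : (∑ j, if Wvec m p.1.2 j p.1.1 = Wvec m p.1.2 i p.1.1 then (1:ℝ) else 0) = 1 := by
      rw [Finset.sum_eq_single_of_mem i (Finset.mem_univ i)]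
      · rw [if_pos rfl]
      · intro j _ hji
        rw [if_neg]
        intro h
        exact hji (key hm hk p.2 p.2 hi h).1
    rw [hone, mul_one] at hco
    exact hco
end

section
/- Let t ≥ 1, let λ_1, …, λ_t be positive integers, and let n ≥ t. When the monomial symmetric polynomial m_{λ_1,…,λ_t}(x_1,…,x_n) = Σ_{i_1,…,i_t distinct} x_{i_1}^{λ_1}⋯x_{i_t}^{λ_t} is written as a polynomial expression in the power sums p_j(x) = x_1^j + ⋯ + x_n^j, the coefficient of p_{λ_1+⋯+λ_t}(x) is (−1)^{t−1}·(t−1)!. -/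
/-! Multiplying `m_λ'` by `p_d` and splitting according to whether the new index is distinct
from the old ones or equal to the `j`-th gives
`p_d · m_{λ'} = m_{(d, λ')} + ∑_j m_{λ' + d e_j}`.
Solving for `m_{(d, λ')}` and inducting on `t` expands `m_λ` in products of power sums over
partitions of `|λ|`. The one-part product `p_{|λ|}` never arises from `p_d` times a term of the
expansion of `m_{λ'}`, so only the `t - 1` merged terms contribute to its coefficient, which
therefore satisfies `c_t = -(t - 1) c_{t-1}` with `c_1 = 1`. -/

open MvPolynomial

/-- The power sum `p_d = x_1^d + ⋯ + x_n^d`. -/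
noncomputable def psum (n d : ℕ) : MvPolynomial (Fin n) ℝ :=
  ∑ i, (X i : MvPolynomial (Fin n) ℝ) ^ d

/-- The augmented monomial symmetric polynomial
`m_{λ₁,…,λ_t}(x) = ∑_{i₁,…,i_t distinct} x_{i₁}^{λ₁} ⋯ x_{i_t}^{λ_t}`. -/
noncomputable def mSym (n t : ℕ) (lam : Fin t → ℕ) : MvPolynomial (Fin n) ℝ :=
  ∑ f ∈ Finset.univ.filter (fun f : Fin t → Fin n => Function.Injective f),
    ∏ j, (X (f j) : MvPolynomial (Fin n) ℝ) ^ lam j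

open Finset

theorem prod_pow_add_single {ι M : Type*} [Fintype ι] [DecidableEq ι] [CommMonoid M]
    (f : ι → M) (lam : ι → ℕ) (j : ι) (d : ℕ) :
    ∏ k, f k ^ (lam + Pi.single j d : ι → ℕ) k = f j ^ d * ∏ k, f k ^ lam k := by
  rw [mul_comm]
  simp only [Pi.add_apply, pow_add, prod_mul_distrib]
  congr 1
  rw [Fintype.prod_eq_single j fun k hk => by simp [hk]]
  simp

theorem mSym_eq_sum_embedding (n t : ℕ) (lam : Fin t → ℕ) :
    mSym n t lam = ∑ e : Fin t ↪ Fin n, ∏ j, (X (e j) : MvPolynomial (Fin n) ℝ) ^ lam j := by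
  rw [mSym, ← sum_subtype_eq_sum_filter, subtype_univ]
  exact (Equiv.subtypeInjectiveEquivEmbedding _ _).sum_comp
    (fun e : Fin t ↪ Fin n => ∏ j, (X (e j) : MvPolynomial (Fin n) ℝ) ^ lam j)

theorem mSym_one (n : ℕ) (lam : Fin 1 → ℕ) : mSym n 1 lam = psum n (lam 0) := by
  rw [mSym_eq_sum_embedding, _root_.psum]
  exact Fintype.sum_equiv Equiv.uniqueEmbeddingEquivResult _ _ fun e => Fin.prod_univ_one _

theorem mSym_cons (n s d : ℕ) (lam : Fin s → ℕ) :
    mSym n (s + 1) (Fin.cons d lam) =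
      ∑ e : Fin s ↪ Fin n, ∑ i ∈ (univ.map e)ᶜ,
        (X i : MvPolynomial (Fin n) ℝ) ^ d * ∏ j, X (e j) ^ lam j := by
  classical
  rw [mSym_eq_sum_embedding, ← (Equiv.embeddingFinSucc s (Fin n)).symm.sum_comp,
    Fintype.sum_sigma]
  refine sum_congr rfl fun e _ => ?_
  simp only [Equiv.coe_embeddingFinSucc_symm, Fin.prod_univ_succ, Fin.cons_zero, Fin.cons_succ]
  refine (sum_subtype _ (fun i => ?_)
    fun i => (X i : MvPolynomial (Fin n) ℝ) ^ d * ∏ j, X (e j) ^ lam j).symm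
  simp

theorem psum_mul_mSym (n s d : ℕ) (lam : Fin s → ℕ) :
    psum n d * mSym n s lam =
      ∑ j, mSym n s (lam + Pi.single j d) + mSym n (s + 1) (Fin.cons d lam) := by
  rw [mSym_cons, mSym_eq_sum_embedding, _root_.psum, sum_mul_sum, sum_comm]
  simp only [mSym_eq_sum_embedding, prod_pow_add_single]
  conv_rhs => rw [sum_comm, ← sum_add_distrib]
  refine sum_congr rfl fun e _ => ?_
  rw [← sum_add_sum_compl (univ.map e), sum_map]

noncomputable def psumProd (n : ℕ) (μ : Multiset ℕ) : MvPolynomial (Fin n) ℝ :=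
  (μ.map (psum n)).prod

theorem psumProd_cons (n d : ℕ) (μ : Multiset ℕ) :
    psumProd n (d ::ₘ μ) = psum n d * psumProd n μ := by
  simp [psumProd]

def partitionsOf (w : ℕ) : Set (Multiset ℕ) := {μ | (∀ a ∈ μ, 0 < a) ∧ μ.sum = w}

theorem cons_mem_partitionsOf {d w : ℕ} {μ : Multiset ℕ} (hd : 0 < d)
    (hμ : μ ∈ partitionsOf w) : d ::ₘ μ ∈ partitionsOf (d + w) := by
  obtain ⟨hpos, hsum⟩ := hμ
  refine ⟨fun a ha => ?_, by simp [hsum]⟩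
  rcases Multiset.mem_cons.1 ha with rfl | ha
  exacts [hd, hpos a ha]

def IsPsumExpansion (n w : ℕ) (P : MvPolynomial (Fin n) ℝ) (c : Multiset ℕ →₀ ℝ) : Prop :=
  c ∈ Finsupp.supported ℝ ℝ (partitionsOf w) ∧ P = Finsupp.linearCombination ℝ (psumProd n) c

theorem isPsumExpansion_psum {n d : ℕ} (hd : 0 < d) :
    IsPsumExpansion n d (psum n d) (Finsupp.single {d} 1) := by
  refine ⟨Finsupp.single_mem_supported ℝ _ ⟨by simpa using hd, by simp⟩, ?_⟩
  simp [psumProd]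

namespace IsPsumExpansion

variable {n w : ℕ} {P Q : MvPolynomial (Fin n) ℝ} {c c' : Multiset ℕ →₀ ℝ}

theorem sub (hP : IsPsumExpansion n w P c) (hQ : IsPsumExpansion n w Q c') :
    IsPsumExpansion n w (P - Q) (c - c') :=
  ⟨sub_mem hP.1 hQ.1, by rw [map_sub, hP.2, hQ.2]⟩

theorem sum {ι : Type*} {s : Finset ι} {P : ι → MvPolynomial (Fin n) ℝ}
    {c : ι → Multiset ℕ →₀ ℝ} (h : ∀ i ∈ s, IsPsumExpansion n w (P i) (c i)) :
    IsPsumExpansion n w (∑ i ∈ s, P i) (∑ i ∈ s, c i) :=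
  ⟨sum_mem fun i hi => (h i hi).1, by rw [map_sum]; exact sum_congr rfl fun i hi => (h i hi).2⟩

theorem psum_mul {d : ℕ} (hd : 0 < d) (hP : IsPsumExpansion n w P c) :
    IsPsumExpansion n (d + w) (psum n d * P) (c.mapDomain (d ::ₘ ·)) := by
  refine ⟨Finsupp.supported_comap_lmapDomain ℝ ℝ _ _
    (Finsupp.supported_mono (fun μ hμ => cons_mem_partitionsOf hd hμ) hP.1), ?_⟩
  rw [Finsupp.linearCombination_mapDomain, hP.2, Finsupp.linearCombination_apply,
    Finsupp.linearCombination_apply, Finsupp.mul_sum]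
  simp [psumProd_cons]

end IsPsumExpansion

theorem mapDomain_cons_apply_singleton {d w : ℕ} (hw : 0 < w) (c : Multiset ℕ →₀ ℝ) :
    c.mapDomain (d ::ₘ ·) {d + w} = 0 :=
  Finsupp.mapDomain_of_notMem_range _ _ fun ⟨μ, hμ⟩ => by
    have := ((Multiset.singleton_eq_cons_iff μ).1 hμ.symm).1
    omega

theorem exists_isPsumExpansion_mSym (n k : ℕ) (lam : Fin (k + 1) → ℕ) (hpos : ∀ j, 0 < lam j) :
    ∃ c, IsPsumExpansion n (∑ j, lam j) (mSym n (k + 1) lam) c ∧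
      c {∑ j, lam j} = (-1) ^ k * k.factorial := by
  induction k with
  | zero =>
    refine ⟨Finsupp.single {lam 0} 1, ?_, by simp⟩
    simpa [mSym_one] using isPsumExpansion_psum (n := n) (hpos 0)
  | succ k ih =>
    obtain ⟨d, lam, rfl⟩ : ∃ d lam', lam = Fin.cons d lam' :=
      ⟨_, _, (Fin.cons_self_tail lam).symm⟩
    have hd : 0 < d := hpos 0
    have hlam : ∀ j, 0 < lam j := fun j => by simpa using hpos j.succ
    obtain ⟨c₀, hc₀, -⟩ := ih lam hlam
    choose c hc hc_val using fun j => ih (lam + Pi.single j d) fun i => by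
      simpa using Nat.add_pos_left (hlam i) _
    have hweight : ∀ j, ∑ i, (lam + Pi.single j d : Fin (k + 1) → ℕ) i = d + ∑ i, lam i :=
      fun j => by simp [sum_add_distrib, add_comm]
    simp only [hweight] at hc hc_val
    have hrec : mSym n (k + 2) (Fin.cons d lam) =
        psum n d * mSym n (k + 1) lam - ∑ j, mSym n (k + 1) (lam + Pi.single j d) := by
      rw [psum_mul_mSym]; ring
    refine ⟨c₀.mapDomain (d ::ₘ ·) - ∑ j, c j, ?_, ?_⟩
    · rw [Fin.sum_cons, hrec]
      exact (hc₀.psum_mul hd).sub (IsPsumExpansion.sum fun j _ => hc j)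
    · rw [Fin.sum_cons, Finsupp.sub_apply, mapDomain_cons_apply_singleton
        (sum_pos (fun i _ => hlam i) univ_nonempty), Finsupp.finsetSum_apply]
      simp [hc_val, Nat.factorial_succ, pow_succ]
      ring

theorem stmt3_general (t : ℕ) (ht : 1 ≤ t) (n : ℕ) (lam : Fin t → ℕ)
    (hpos : ∀ j, 0 < lam j) :
    ∃ c : Multiset ℕ →₀ ℝ,
      (∀ μ ∈ c.support, (∀ a ∈ μ, 0 < a) ∧ μ.sum = ∑ j, lam j) ∧
      mSym n t lam = c.sum (fun μ coef => coef • (μ.map (psum n)).prod) ∧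
      c ({∑ j, lam j} : Multiset ℕ) = (-1 : ℝ) ^ (t - 1) * (t - 1).factorial := by
  obtain ⟨k, rfl⟩ := Nat.exists_eq_add_of_le' ht
  obtain ⟨c, ⟨hsupp, hexp⟩, hval⟩ := exists_isPsumExpansion_mSym n k lam hpos
  exact ⟨c, fun μ hμ => (Finsupp.mem_supported ℝ c).1 hsupp hμ, hexp, by simpa using hval⟩

/-- when `m_{λ₁,…,λ_t}` is written as a linear combination of products of
power sums `p_{μ₁}⋯p_{μ_s}` (indexed by multisets `μ` of positive integers with
`μ.sum = λ₁+⋯+λ_t`), the coefficient of `p_{λ₁+⋯+λ_t}` is `(-1)^(t-1) * (t-1)!`. -/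
theorem stmt3 (t : ℕ) (ht : 1 ≤ t) (n : ℕ) (hn : t ≤ n) (lam : Fin t → ℕ)
    (hpos : ∀ j, 0 < lam j) :
    ∃ c : Multiset ℕ →₀ ℝ,
      (∀ μ ∈ c.support, (∀ a ∈ μ, 0 < a) ∧ μ.sum = ∑ j, lam j) ∧
      mSym n t lam = c.sum (fun μ coef => coef • (μ.map (psum n)).prod) ∧
      c ({∑ j, lam j} : Multiset ℕ) = (-1 : ℝ) ^ (t - 1) * (t - 1).factorial :=
  stmt3_general t ht n lam hpos
end

section
/- Let x be an indeterminate, let m ≥ 1 and k ≥ 1 be integers, and let q_k = ⌊mk/(m+1)⌋. Define the falling factorials (y)^{\underline{s}} = y(y−1)⋯(y−s+1). Then there exist unique real numbers a_{k,0,m} and a_{k,l,r} (for 1 ≤ l ≤ q_k, 0 ≤ r ≤ m) such that ((x−1)^{\underline{m}})^k = a_{k,0,m}·(x−1)^{\underline{m}} + Σ_{l=1}^{q_k} Σ_{r=0}^{m} a_{k,l,r} · ((x)^{\underline{m+1}})^l · (x+r−m−1)^{\underline{r}}. -/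
open Polynomial

/-- The falling factorial `(p)^{\underline{s}} = p (p-1) ⋯ (p-s+1)` of a polynomial `p`. -/
noncomputable def ffall (p : Polynomial ℝ) (s : ℕ) : Polynomial ℝ :=
  ∏ j ∈ Finset.range s, (p - (j : Polynomial ℝ))

lemma ffall_monic {u : ℝ[X]} (hu : u.Monic) (h1 : u.natDegree = 1) (s : ℕ) :
    (ffall u s).Monic ∧ (ffall u s).natDegree = s := by
  have hdu : u.degree = 1 := by
    rw [degree_eq_natDegree hu.ne_zero, h1]; rfl
  have hfac : ∀ j : ℕ, (u - (j : ℝ[X])).Monic ∧ (u - (j : ℝ[X])).natDegree = 1 := by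
    intro j
    rw [← Polynomial.C_eq_natCast]
    refine ⟨hu.sub_of_left ?_, by rw [natDegree_sub_C, h1]⟩
    calc degree (C ((j:ℕ):ℝ)) ≤ 0 := degree_C_le
    _ < degree u := by rw [hdu]; norm_num
  have hmon : (ffall u s).Monic :=
    monic_prod_of_monic _ _ fun j _ => (hfac j).1
  refine ⟨hmon, ?_⟩
  rw [ffall, natDegree_prod_of_monic _ _ fun j _ => (hfac j).1]
  simp [(hfac _).2]

lemma repr_exists_unique {ι : Type} [Fintype ι] {n : ℕ} (e : ι ≃ Fin n)
    (P : ι → ℝ[X]) (hmon : ∀ i, (P i).Monic) (hdeg : ∀ i, (P i).natDegree = (e i : ℕ))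
    (g : ℝ[X]) (hg : g.degree < (n : ℕ)) :
    ∃! c : ι → ℝ, g = ∑ i, C (c i) * P i := by
  have hmem : ∀ c : ι → ℝ, (∑ i, C (c i) * P i) ∈ degreeLT ℝ n := by
    intro c
    refine Submodule.sum_mem _ fun i _ => ?_
    rw [← smul_eq_C_mul]
    refine Submodule.smul_mem _ _ (mem_degreeLT.2 ?_)
    calc (P i).degree ≤ ((P i).natDegree : WithBot ℕ) := degree_le_natDegree
    _ < (n : WithBot ℕ) := by rw [hdeg i]; exact_mod_cast (e i).isLt
  let L : (ι → ℝ) →ₗ[ℝ] degreeLT ℝ n :=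
    { toFun := fun c => ⟨∑ i, C (c i) * P i, hmem c⟩
      map_add' := fun c d => by
        apply Subtype.ext
        simp [C_add, add_mul, Finset.sum_add_distrib]
      map_smul' := fun r c => by
        apply Subtype.ext
        simp [Finset.smul_sum, smul_eq_C_mul, C_mul, mul_assoc] }
  have hinj : Function.Injective L := by
    rw [injective_iff_map_eq_zero]
    intro c hc
    have hc0 : (∑ i, C (c i) * P i) = 0 := congrArg Subtype.val hc
    by_contra hne
    obtain ⟨j0, hj0⟩ := Function.ne_iff.1 hne
    have hS : (Finset.univ.filter fun i => c i ≠ 0).Nonempty :=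
      ⟨j0, Finset.mem_filter.2 ⟨Finset.mem_univ _, hj0⟩⟩
    obtain ⟨j, hjS, hjmax⟩ := Finset.exists_max_image _ (fun i => (e i : ℕ)) hS
    have hcj : c j ≠ 0 := (Finset.mem_filter.1 hjS).2
    have hco : (∑ i, C (c i) * P i).coeff (e j) = c j := by
      rw [finset_sum_coeff, Finset.sum_eq_single j]
      · rw [coeff_C_mul, ← hdeg j, (hmon j).coeff_natDegree, mul_one]
      · intro i _ hij
        rw [coeff_C_mul]
        by_cases hci : c i = 0
        · rw [hci, zero_mul]
        · have hi : i ∈ Finset.univ.filter fun i => c i ≠ 0 :=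
            Finset.mem_filter.2 ⟨Finset.mem_univ _, hci⟩
          have hlt : (e i : ℕ) < (e j : ℕ) :=
            lt_of_le_of_ne (hjmax i hi) fun h' => hij (e.injective (Fin.ext h'))
          rw [coeff_eq_zero_of_natDegree_lt (by rw [hdeg i]; exact hlt), mul_zero]
      · exact fun h => absurd (Finset.mem_univ j) h
    rw [hc0, coeff_zero] at hco
    exact hcj hco.symm
  haveI : FiniteDimensional ℝ (degreeLT ℝ n) :=
    Module.Finite.equiv (degreeLTEquiv ℝ n).symm
  have hrank : Module.finrank ℝ (ι → ℝ) = Module.finrank ℝ (degreeLT ℝ n) := by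
    rw [(degreeLTEquiv ℝ n).finrank_eq]
    simp [Fintype.card_congr e]
  have hsurj : Function.Surjective L :=
    (LinearMap.injective_iff_surjective_of_finrank_eq_finrank hrank).1 hinj
  obtain ⟨c, hcL⟩ := hsurj ⟨g, mem_degreeLT.2 hg⟩
  refine ⟨c, (congrArg Subtype.val hcL).symm, fun c' hc' => hinj ?_⟩
  rw [hcL]
  exact Subtype.ext hc'.symm

lemma ffall_X_succ (m : ℕ) : ffall X (m + 1) = X * ffall (X - 1 : ℝ[X]) m := by
  rw [ffall, Finset.prod_range_succ']
  push_cast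
  rw [ffall, sub_zero, mul_comm]
  congr 1
  refine Finset.prod_congr rfl fun j _ => ?_
  ring

/-- with `q_k = ⌊mk/(m+1)⌋`, there exist unique reals `a_{k,0,m}` and
`a_{k,l,r}` (`1 ≤ l ≤ q_k`, `0 ≤ r ≤ m`) with
`((x-1)^{m̲})^k = a_{k,0,m} (x-1)^{m̲} + ∑_{l,r} a_{k,l,r} ((x)^{(m+1)̲})^l (x+r-m-1)^{r̲}`. -/
theorem stmt5 (m k : ℕ) (hm : 1 ≤ m) (hk : 1 ≤ k) :
    ∃! a : ℝ × (Fin (m * k / (m + 1)) × Fin (m + 1) → ℝ),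
      ffall (X - 1) m ^ k =
        C a.1 * ffall (X - 1) m +
          ∑ l : Fin (m * k / (m + 1)), ∑ r : Fin (m + 1),
            C (a.2 (l, r)) * ffall X (m + 1) ^ ((l : ℕ) + 1) *
              ffall (X + ((r : ℕ) : Polynomial ℝ) - ((m : ℕ) : Polynomial ℝ) - 1) (r : ℕ) := by
  set q := m * k / (m + 1) with hq
  set B : ℝ[X] := ffall (X - 1) m with hBdef
  have hB : B.Monic ∧ B.natDegree = m := by
    have : (X - 1 : ℝ[X]) = X - C 1 := by rw [C_1]
    rw [hBdef, this]
    exact ffall_monic (monic_X_sub_C 1) (natDegree_X_sub_C 1) m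
  have hF : ffall X (m + 1) = X * B := ffall_X_succ m
  have hFm : (ffall X (m + 1)).Monic ∧ (ffall X (m + 1)).natDegree = m + 1 :=
    ffall_monic monic_X natDegree_X (m + 1)
  have hG : ∀ r : ℕ,
      (ffall (X + ((r:ℕ) : ℝ[X]) - ((m:ℕ) : ℝ[X]) - 1) r).Monic ∧
      (ffall (X + ((r:ℕ) : ℝ[X]) - ((m:ℕ) : ℝ[X]) - 1) r).natDegree = r := by
    intro r
    have hw : (X + ((r:ℕ) : ℝ[X]) - ((m:ℕ) : ℝ[X]) - 1)
        = X - C (((m:ℕ):ℝ) + 1 - ((r:ℕ):ℝ)) := by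
      simp only [C_sub, C_add, C_1, C_eq_natCast]
      ring
    rw [hw]
    exact ffall_monic (monic_X_sub_C _) (natDegree_X_sub_C _) r
  -- the index type and the quotient family
  set n := q * (m + 1) + 1 with hn
  let e : Option (Fin q × Fin (m + 1)) ≃ Fin n :=
    (Equiv.optionCongr finProdFinEquiv).trans (finSuccEquiv _).symm
  let P : Option (Fin q × Fin (m + 1)) → ℝ[X] := fun i =>
    Option.elim i 1 fun p =>
      X * ffall X (m + 1) ^ (p.1 : ℕ) *
        ffall (X + ((p.2 : ℕ) : ℝ[X]) - ((m : ℕ) : ℝ[X]) - 1) (p.2 : ℕ)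
  have hPmon : ∀ i, (P i).Monic := by
    rintro (_ | ⟨l, r⟩)
    · exact monic_one
    · exact (monic_X.mul (hFm.1.pow _)).mul (hG r).1
  have heval : ∀ p : Fin q × Fin (m + 1),
      (e (some p) : ℕ) = (p.2 : ℕ) + (m + 1) * (p.1 : ℕ) + 1 := by
    intro p
    have : e (some p) = (finProdFinEquiv p).succ := by
      simp [e, finSuccEquiv]
    rw [this, Fin.val_succ, finProdFinEquiv_apply_val]
  have hPdeg : ∀ i, (P i).natDegree = (e i : ℕ) := by
    rintro (_ | ⟨l, r⟩)
    · have : e none = 0 := by simp [e, finSuccEquiv]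
      simp [P, this]
    · rw [heval ⟨l, r⟩]
      show ((X * ffall X (m+1) ^ (l:ℕ)) * _).natDegree = _
      rw [(monic_X.mul (hFm.1.pow _)).natDegree_mul (hG r).1,
        monic_X.natDegree_mul (hFm.1.pow _), natDegree_X, natDegree_pow, hFm.2, (hG r).2]
      ring
  -- target polynomial after dividing by B
  have hdvd : (k - 1) * m < n := by
    have h1 : q * (m + 1) + m * k % (m + 1) = m * k := by
      rw [mul_comm]; exact Nat.div_add_mod (m * k) (m + 1)
    have h2 : m * k % (m + 1) < m + 1 := Nat.mod_lt _ (by omega)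
    have h3 : (k - 1) * m = m * k - m := by
      rw [Nat.sub_mul, one_mul, mul_comm k m]
    omega
  have hgdeg : (B ^ (k - 1)).degree < (n : ℕ) := by
    rw [degree_eq_natDegree (hB.1.pow _).ne_zero, natDegree_pow, hB.2]
    exact_mod_cast hdvd
  obtain ⟨c, hcrepr, hcuniq⟩ := repr_exists_unique e P hPmon hPdeg (B ^ (k - 1)) hgdeg
  -- the key algebraic identity
  have key : ∀ d : Option (Fin q × Fin (m + 1)) → ℝ,
      C (d none) * B +
          ∑ l : Fin q, ∑ r : Fin (m + 1),
            C (d (some (l, r))) * ffall X (m + 1) ^ ((l : ℕ) + 1) *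
              ffall (X + ((r : ℕ) : ℝ[X]) - ((m : ℕ) : ℝ[X]) - 1) (r : ℕ)
        = B * ∑ i, C (d i) * P i := by
    intro d
    rw [Fintype.sum_option, Fintype.sum_prod_type, mul_add, Finset.mul_sum]
    congr 1
    · simp [P, mul_comm]
    · refine Finset.sum_congr rfl fun l _ => ?_
      rw [Finset.mul_sum]
      refine Finset.sum_congr rfl fun r _ => ?_
      show _ = B * (C (d (some (l, r))) * (X * ffall X (m+1) ^ (l:ℕ) * _))
      rw [hF]
      ring
  have hBk : B ^ k = B * B ^ (k - 1) := by
    rw [← pow_succ']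
    congr 1
    omega
  have hBne : B ≠ 0 := hB.1.ne_zero
  refine ⟨(c none, fun p => c (some p)), ?_, ?_⟩
  · show B ^ k = _
    have h := key c
    rw [← hcrepr, ← hBk] at h
    exact h.symm
  · rintro ⟨a1, a2⟩ ha
    have h1 : B ^ k = B * ∑ i, C (Option.elim i a1 (fun p => a2 p)) * P i :=
      ha.trans (key (fun i => Option.elim i a1 (fun p => a2 p)))
    have h2 : B ^ (k - 1) = ∑ i, C (Option.elim i a1 (fun p => a2 p)) * P i := by
      apply mul_left_cancel₀ hBne
      rw [← hBk]; exact h1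
    have h3 := hcuniq _ h2
    refine Prod.ext ?_ ?_
    · exact congrFun h3 none
    · funext p
      exact congrFun h3 (some p)
end

section
/- Let m ≥ 1 and k ≥ 2. With a_{k,l,r} the coefficients in the expansion of ((x−1)^{\underline{m}})^k in the basis {(x−1)^{\underline{m}}} ∪ {((x)^{\underline{m+1}})^l (x+r−m−1)^{\underline{r}} : 1 ≤ l, 0 ≤ r ≤ m}, these coefficients satisfy the recurrences: a_{k,l,r} = a_{k−1,l−1,r+1} − (m−r−1)·a_{k,l,r+1} for 0 ≤ r ≤ m−1, and a_{k,l,m} = a_{k−1,l,0} − m·a_{k,l+1,0}. -/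
open Polynomial

open Finset
noncomputable def BB (m l r : ℕ) : ℝ[X] :=
  ffall X (m+1) ^ l * ffall (X + (r : ℝ[X]) - (m : ℝ[X]) - 1) r

section PolyLemmas

lemma ffall_C (c : ℝ) (n : ℕ) : ffall (X + C c) n = ∏ j ∈ range n, (X + C (c - j)) := by
  unfold ffall
  refine Finset.prod_congr rfl fun j _ => ?_
  rw [C_sub, ← map_natCast (C : ℝ →+* ℝ[X]) j]; ring

lemma ffall_C_monic (c : ℝ) (n : ℕ) : (ffall (X + C c) n).Monic := by
  rw [ffall_C]; exact monic_prod_of_monic _ _ fun j _ => monic_X_add_C _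

lemma ffall_C_natDegree (c : ℝ) (n : ℕ) : (ffall (X + C c) n).natDegree = n := by
  rw [ffall_C, natDegree_prod]
  · simp only [natDegree_X_add_C]; simp
  · exact fun j _ => (monic_X_add_C _).ne_zero

lemma X_eq : (X : ℝ[X]) = X + C 0 := by simp
lemma Xsub_eq (r m : ℕ) : (X + (r : ℝ[X]) - (m : ℝ[X]) - 1 : ℝ[X]) = X + C ((r:ℝ) - m - 1) := by
  rw [C_sub, C_sub, C_1, map_natCast (C : ℝ →+* ℝ[X]) r, map_natCast (C : ℝ →+* ℝ[X]) m]
  ring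

lemma ffX : ffall (X:ℝ[X]) = ffall (X + C 0) := by rw [← X_eq]

lemma BB_monic (m l r : ℕ) : (BB m l r).Monic := by
  unfold BB; rw [Xsub_eq, ffX]
  exact ((ffall_C_monic _ _).pow _).mul (ffall_C_monic _ _)

lemma BB_natDegree (m l r : ℕ) : (BB m l r).natDegree = l * (m+1) + r := by
  unfold BB; rw [Xsub_eq, ffX, natDegree_mul, natDegree_pow, ffall_C_natDegree,
    ffall_C_natDegree, mul_comm]
  · exact (((ffall_C_monic _ _).pow _)).ne_zero
  · exact (ffall_C_monic _ _).ne_zero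

lemma BB_zero (m : ℕ) : BB m 0 m = ffall (X - 1) m := by
  unfold BB
  rw [pow_zero, one_mul]
  congr 1
  ring

lemma ffall_succ' (p : ℝ[X]) (n : ℕ) : ffall p (n+1) = ffall (p - 1) n * p := by
  unfold ffall
  rw [Finset.prod_range_succ']
  congr 1
  · refine Finset.prod_congr rfl fun j _ => ?_
    push_cast
    ring
  · simp

lemma GG_succ (m r : ℕ) :
    ffall (X + ((r:ℕ)+1 : ℝ[X]) - (m : ℝ[X]) - 1) (r+1)
      = ffall (X + (r : ℝ[X]) - (m : ℝ[X]) - 1) r * (X + (r : ℝ[X]) - (m : ℝ[X])) := by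
  rw [ffall_succ']
  congr 1 <;> ring

lemma GG_m (m : ℕ) : ffall (X + (m : ℝ[X]) - (m : ℝ[X]) - 1) m = ffall (X - 1) m := by
  congr 1; ring

lemma ffall_zero (p : ℝ[X]) : ffall p 0 = 1 := by simp [ffall]

lemma ffX_succ (m : ℕ) : ffall X (m+1) = ffall (X - 1) m * X := ffall_succ' X m

lemma K1 (m l r : ℕ) :
    ffall (X - 1) m * BB m l (r+1) + C ((m:ℝ) - r) * (ffall (X - 1) m * BB m l r)
      = BB m (l+1) r := by
  have hC : (C ((m:ℝ) - r) : ℝ[X]) = (m : ℝ[X]) - (r : ℝ[X]) := by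
    rw [C_sub, map_natCast, map_natCast]
  unfold BB
  have h1 : (((r:ℕ)+1 : ℕ) : ℝ[X]) = ((r:ℕ)+1 : ℝ[X]) := by push_cast; ring
  rw [h1, GG_succ, pow_succ, ffX_succ, hC]
  ring

lemma K0 (m l : ℕ) : ffall (X - 1) m * BB m l 0 = BB m l m := by
  unfold BB
  rw [ffall_zero, GG_m]
  ring

lemma BBe (m l r : ℕ) (x : ℝ) :
    C x * ffall X (m+1) ^ l * ffall (X + (r : ℝ[X]) - (m : ℝ[X]) - 1) r = C x * BB m l r := by
  unfold BB; ring

end PolyLemmas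

section Indep

lemma indep (s : Finset (ℕ×ℕ)) (p : ℕ×ℕ → ℝ[X]) (c : ℕ×ℕ → ℝ)
    (hmon : ∀ i ∈ s, (p i).Monic)
    (hinj : ∀ i ∈ s, ∀ j ∈ s, (p i).natDegree = (p j).natDegree → i = j)
    (hsum : ∑ i ∈ s, C (c i) * p i = 0) : ∀ i ∈ s, c i = 0 := by
  induction s using Finset.strongInduction with
  | _ s ih =>
    rcases s.eq_empty_or_nonempty with rfl | hne
    · simp
    obtain ⟨i0, hi0, hmax⟩ := s.exists_max_image (fun i => (p i).natDegree) hne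
    have hc0 : c i0 = 0 := by
      have h1 := congrArg (fun q => Polynomial.coeff q ((p i0).natDegree)) hsum
      simp only [finset_sum_coeff, coeff_C_mul, coeff_zero] at h1
      rw [Finset.sum_eq_single_of_mem i0 hi0] at h1
      · rwa [(hmon i0 hi0).coeff_natDegree, mul_one] at h1
      · intro j hj hji
        rw [coeff_eq_zero_of_natDegree_lt, mul_zero]
        exact lt_of_le_of_ne (hmax j hj) (fun h => hji (hinj j hj i0 hi0 h))
    intro i hi
    rcases eq_or_ne i i0 with rfl | hne2
    · exact hc0
    have hsub : s.erase i0 ⊂ s := Finset.erase_ssubset hi0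
    refine ih (s.erase i0) hsub (fun j hj => hmon j (Finset.mem_of_mem_erase hj))
      (fun j hj j' hj' => hinj j (Finset.mem_of_mem_erase hj) j' (Finset.mem_of_mem_erase hj'))
      ?_ i (Finset.mem_erase.2 ⟨hne2, hi⟩)
    rw [← Finset.add_sum_erase s (fun i => C (c i) * p i) hi0, hc0] at hsum
    simpa using hsum

lemma keyinj (m l r l' r' : ℕ) (hr : r ≤ m) (hr' : r' ≤ m)
    (h : l*(m+1)+r = l'*(m+1)+r') : l = l' ∧ r = r' := by
  have e1 : ∀ x y : ℕ, y ≤ m → (x*(m+1)+y)/(m+1) = x := by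
    intro x y hy
    rw [add_comm, mul_comm, Nat.add_mul_div_left _ _ (by omega), Nat.div_eq_of_lt (by omega)]
    omega
  have heq : l = l' := by rw [← e1 l r hr, ← e1 l' r' hr', h]
  subst heq
  exact ⟨rfl, by omega⟩

lemma uniq (m L : ℕ) (u0 v0 : ℝ) (u v : ℕ → ℕ → ℝ)
    (h : C u0 * ffall (X-1:ℝ[X]) m + ∑ l ∈ Icc 1 L, ∑ r ∈ range (m+1), C (u l r) * BB m l r
       = C v0 * ffall (X-1) m + ∑ l ∈ Icc 1 L, ∑ r ∈ range (m+1), C (v l r) * BB m l r) :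
    u0 = v0 ∧ ∀ l, 1 ≤ l → l ≤ L → ∀ r, r ≤ m → u l r = v l r := by
  have hmem : ((0:ℕ), m) ∉ (Icc 1 L) ×ˢ (range (m+1)) := by simp
  set c : ℕ×ℕ → ℝ := fun i => if i.1 = 0 then u0 - v0 else u i.1 i.2 - v i.1 i.2 with hc
  set s := insert ((0:ℕ),m) ((Icc 1 L) ×ˢ (range (m+1))) with hs
  have hsum : ∑ i ∈ s, C (c i) * BB m i.1 i.2 = 0 := by
    rw [hs, Finset.sum_insert hmem]
    have h2 : ∑ i ∈ (Icc 1 L) ×ˢ (range (m+1)), C (c i) * BB m i.1 i.2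
        = ∑ i ∈ (Icc 1 L) ×ˢ (range (m+1)), (C (u i.1 i.2) * BB m i.1 i.2
          - C (v i.1 i.2) * BB m i.1 i.2) := by
      refine Finset.sum_congr rfl fun i hi => ?_
      rw [Finset.mem_product, Finset.mem_Icc] at hi
      rw [hc]
      simp only [if_neg (by omega : ¬ i.1 = 0)]
      rw [C_sub, sub_mul]
    rw [h2, Finset.sum_sub_distrib]
    simp only [Finset.sum_product]
    have h3 : c ((0:ℕ), m) = u0 - v0 := by simp [hc]
    rw [h3, C_sub, sub_mul, BB_zero]
    linear_combination h
  have hrle : ∀ i ∈ s, i.2 ≤ m := by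
    intro i hi
    rw [hs, Finset.mem_insert] at hi
    rcases hi with rfl | hi
    · exact le_refl m
    · rw [Finset.mem_product, Finset.mem_range] at hi; omega
  have hz := indep s (fun i => BB m i.1 i.2) c
    (fun i _ => BB_monic m i.1 i.2)
    (fun i hi j hj hd => by
      simp only [BB_natDegree] at hd
      obtain ⟨h1, h2⟩ := keyinj m i.1 i.2 j.1 j.2 (hrle i hi) (hrle j hj) hd
      exact Prod.ext h1 h2) hsum
  constructor
  · have := hz ((0:ℕ), m) (Finset.mem_insert_self _ _)
    simp only [hc] at this
    simpa [sub_eq_zero] using this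
  · intro l h1 hL r hr
    have hmem2 : ((l,r) : ℕ×ℕ) ∈ s := by
      rw [hs]
      exact Finset.mem_insert_of_mem (Finset.mem_product.2
        ⟨Finset.mem_Icc.2 ⟨h1, hL⟩, Finset.mem_range.2 (by omega)⟩)
    have := hz (l, r) hmem2
    simp only [hc, if_neg (by omega : ¬ ((l,r) : ℕ×ℕ).1 = 0)] at this
    exact sub_eq_zero.1 this

end Indep

section Rows

noncomputable def eaux (m : ℕ) (c : ℕ → ℝ) : ℕ → ℝ
  | 0 => 0
  | (t+1) => c (m - t) - (t : ℝ) * eaux m c t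

noncomputable def erow (m : ℕ) (c : ℕ → ℝ) (r : ℕ) : ℝ := eaux m c (m - r)
noncomputable def drow (m : ℕ) (c : ℕ → ℝ) : ℝ := c 0 - (m : ℝ) * erow m c 0

lemma erow_ge (m : ℕ) (c : ℕ → ℝ) (r : ℕ) (h : m ≤ r) : erow m c r = 0 := by
  unfold erow
  rw [Nat.sub_eq_zero_of_le h]
  rfl

lemma erow_rec (m : ℕ) (c : ℕ → ℝ) (r : ℕ) (h : r < m) :
    erow m c r = c (r+1) - ((m:ℝ) - r - 1) * erow m c (r+1) := by
  unfold erow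
  have h1 : m - r = (m - (r+1)) + 1 := by omega
  rw [h1]
  show c (m - (m - (r+1))) - _ * _ = _
  have h2 : m - (m - (r+1)) = r + 1 := by omega
  have h3 : ((m - (r+1) : ℕ) : ℝ) = (m:ℝ) - r - 1 := by
    have : ((m - (r+1) : ℕ) : ℝ) = (m:ℝ) - ((r+1:ℕ):ℝ) := by
      rw [Nat.cast_sub (by omega)]
    rw [this]; push_cast; ring
  rw [h2, h3]

lemma erow_zero (m : ℕ) (c : ℕ → ℝ) (h : ∀ r, r ≤ m → c r = 0) (r : ℕ) :
    erow m c r = 0 := by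
  unfold erow
  have : ∀ t, t ≤ m → eaux m c t = 0 := by
    intro t
    induction t with
    | zero => intro _; rfl
    | succ t ih =>
      intro ht
      show c (m - t) - (t : ℝ) * eaux m c t = 0
      rw [h (m - t) (by omega), ih (by omega)]
      ring
  exact this _ (by omega)

lemma drow_zero (m : ℕ) (c : ℕ → ℝ) (h : ∀ r, r ≤ m → c r = 0) : drow m c = 0 := by
  unfold drow
  rw [h 0 (by omega), erow_zero m c h]
  ring

lemma row (m l : ℕ) (c : ℕ → ℝ) :
    ∑ r ∈ range (m+1), C (c r) * (ffall (X-1) m * BB m l r)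
      = C (drow m c) * BB m l m + ∑ j ∈ range m, C (erow m c j) * BB m (l+1) j := by
  have step1 : ∑ r ∈ range (m+1), C (c r) * (ffall (X-1) m * BB m l r)
      = ∑ r ∈ range (m+1),
          ((if r = 0 then C (drow m c) else C (erow m c (r-1))) * (ffall (X-1) m * BB m l r)
          + C ((m:ℝ) - r) * C (erow m c r) * (ffall (X-1) m * BB m l r)) := by
    refine Finset.sum_congr rfl fun r hr => ?_
    rw [Finset.mem_range] at hr
    match r with
    | 0 =>
      simp only [if_pos rfl]
      have hc0 : c 0 = drow m c + (m:ℝ) * erow m c 0 := by unfold drow; ring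
      rw [hc0, C_add, C_mul]
      push_cast
      ring
    | (t+1) =>
      simp only [if_neg (Nat.succ_ne_zero t), Nat.add_sub_cancel]
      have hct : c (t+1) = erow m c t + ((m:ℝ) - (t+1)) * erow m c (t+1) := by
        rw [erow_rec m c t (by omega)]; push_cast; ring
      rw [hct, C_add, C_mul]
      push_cast
      ring
  rw [step1, Finset.sum_add_distrib, Finset.sum_range_succ', Finset.sum_range_succ]
  simp only [Nat.succ_ne_zero, if_false, if_pos rfl, if_true, Nat.add_sub_cancel]
  have hz : C ((m:ℝ) - (m:ℕ)) * C (erow m c m) * (ffall (X-1) m * BB m l m) = 0 := by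
    simp
  rw [hz, add_zero, K0, add_right_comm, ← Finset.sum_add_distrib]
  have key : ∀ i ∈ range m,
      C (erow m c i) * (ffall (X-1) m * BB m l (i+1))
        + C ((m:ℝ) - i) * C (erow m c i) * (ffall (X-1) m * BB m l i)
      = C (erow m c i) * BB m (l+1) i := by
    intro i _
    rw [← K1 m l i]
    ring
  rw [Finset.sum_congr rfl key]
  ring

lemma sum_shift {β : Type*} [AddCommMonoid β] (n : ℕ) (f : ℕ → β) :
    ∑ l ∈ Icc 1 n, f l = ∑ i ∈ range n, f (i+1) := by
  rw [← Finset.Ico_add_one_right_eq_Icc, Finset.sum_Ico_eq_sum_range]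
  refine Finset.sum_congr (by norm_num) fun i _ => by rw [add_comm]

lemma range_split {β : Type*} [AddCommMonoid β] (n : ℕ) (f : ℕ → β) :
    ∑ i ∈ range (n+1), f i = f 0 + ∑ l ∈ Icc 1 n, f l := by
  rw [Finset.sum_range_succ', sum_shift]
  exact add_comm _ _

end Rows

/-- the coefficients `a_{k,l,r}` in the expansions
`((x-1)^{m̲})^k = a_{k,0,m}(x-1)^{m̲} + ∑_{l=1}^{q_k} ∑_{r=0}^{m} a_{k,l,r}((x)^{(m+1)̲})^l (x+r-m-1)^{r̲}`
(with out-of-range coefficients zero) satisfy the recurrences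
`a_{k,l,r} = a_{k-1,l-1,r+1} - (m-r-1) a_{k,l,r+1}` for `0 ≤ r ≤ m-1`, and
`a_{k,l,m} = a_{k-1,l,0} - m a_{k,l+1,0}`. -/
theorem stmt6 (m k : ℕ) (hm : 1 ≤ m) (hk : 2 ≤ k) (a : ℕ → ℕ → ℕ → ℝ)
    (hexp : ∀ k', 1 ≤ k' →
      ffall (X - 1) m ^ k' =
        C (a k' 0 m) * ffall (X - 1) m +
          ∑ l ∈ Finset.Icc 1 (m * k' / (m + 1)), ∑ r ∈ Finset.range (m + 1),
            C (a k' l r) * ffall X (m + 1) ^ l *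
              ffall (X + (r : Polynomial ℝ) - (m : Polynomial ℝ) - 1) r)
    (hzero : ∀ k' l r, (l = 0 ∧ r ≠ m) ∨ m * k' / (m + 1) < l ∨ m < r → a k' l r = 0) :
    ∀ l, 1 ≤ l →
      (∀ r, r ≤ m - 1 →
        a k l r = a (k - 1) (l - 1) (r + 1) - ((m : ℝ) - (r : ℝ) - 1) * a k l (r + 1)) ∧
      a k l m = a (k - 1) l 0 - (m : ℝ) * a k (l + 1) 0 := by
  have hm1 : (1:ℕ) ≤ k - 1 := by omega
  have hML : m * (k-1) / (m+1) + 1 ≤ max (m * k / (m+1)) (m * (k-1) / (m+1) + 1) :=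
    le_max_right _ _
  have hNL : m * k / (m+1) ≤ max (m * k / (m+1)) (m * (k-1) / (m+1) + 1) :=
    le_max_left _ _
  set L := max (m * k / (m+1)) (m * (k-1) / (m+1) + 1) with hLdef
  set v : ℕ → ℕ → ℝ := fun l r =>
    if r = m then drow m (a (k-1) l) else erow m (a (k-1) (l-1)) r with hv
  -- Step A : expansion of F^k over the extended range Icc 1 L
  have hA : ffall (X - 1) m ^ k
      = C (a k 0 m) * ffall (X-1:ℝ[X]) m
        + ∑ l ∈ Icc 1 L, ∑ r ∈ range (m+1), C (a k l r) * BB m l r := by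
    rw [hexp k (by omega)]
    congr 1
    calc ∑ l ∈ Icc 1 (m * k / (m+1)), ∑ r ∈ range (m + 1),
            C (a k l r) * ffall X (m + 1) ^ l *
              ffall (X + (r : ℝ[X]) - (m : ℝ[X]) - 1) r
        = ∑ l ∈ Icc 1 (m * k / (m+1)), ∑ r ∈ range (m+1), C (a k l r) * BB m l r :=
          Finset.sum_congr rfl fun l _ => Finset.sum_congr rfl fun r _ => BBe m l r _
      _ = ∑ l ∈ Icc 1 L, ∑ r ∈ range (m+1), C (a k l r) * BB m l r := by
          refine Finset.sum_subset (Finset.Icc_subset_Icc_right hNL) ?_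
          intro x hx hnx
          refine Finset.sum_eq_zero fun r hr => ?_
          rw [Finset.mem_Icc] at hx
          rw [Finset.mem_Icc] at hnx
          rw [hzero k x r (Or.inr (Or.inl (by omega))), map_zero, zero_mul]
  -- Step B : F^k as F times the expansion of F^(k-1)
  have hB : ffall (X - 1) m ^ k
      = ∑ l ∈ range (m * (k-1) / (m+1) + 1), ∑ r ∈ range (m+1),
          C (a (k-1) l r) * (ffall (X-1) m * BB m l r) := by
    have h2 : ffall (X - 1) m ^ k = ffall (X - 1) m ^ (k-1) * ffall (X - 1) m := by
      rw [← pow_succ]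
      congr 1
      omega
    rw [h2, hexp (k-1) hm1, add_mul, Finset.sum_mul, range_split]
    congr 1
    · rw [Finset.sum_range_succ, Finset.sum_eq_zero, zero_add, BB_zero]
      · ring
      · intro r hr
        rw [Finset.mem_range] at hr
        rw [hzero (k-1) 0 r (Or.inl ⟨rfl, by omega⟩), map_zero, zero_mul]
    · refine Finset.sum_congr rfl fun l hl => ?_
      rw [Finset.sum_mul]
      refine Finset.sum_congr rfl fun r hr => ?_
      unfold BB
      ring
  -- Step C : rewrite Step B in basis form with coefficients v
  have hC : ffall (X - 1) m ^ k
      = C (drow m (a (k-1) 0)) * ffall (X-1:ℝ[X]) m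
        + ∑ l ∈ Icc 1 L, ∑ r ∈ range (m+1), C (v l r) * BB m l r := by
    rw [hB, Finset.sum_congr rfl (fun l _ => row m l (a (k-1) l)), Finset.sum_add_distrib,
      range_split]
    have hpc1 : ∑ l ∈ Icc 1 (m * (k-1) / (m+1)), C (drow m (a (k-1) l)) * BB m l m
        = ∑ l ∈ Icc 1 L, C (drow m (a (k-1) l)) * BB m l m := by
      refine Finset.sum_subset (Finset.Icc_subset_Icc_right (by omega)) ?_
      intro x hx hnx
      rw [Finset.mem_Icc] at hx
      rw [Finset.mem_Icc] at hnx
      rw [drow_zero m _ (fun r hr => hzero (k-1) x r (Or.inr (Or.inl (by omega)))),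
        map_zero, zero_mul]
    have hpc2 : ∑ l ∈ range (m * (k-1) / (m+1) + 1), ∑ j ∈ range m,
          C (erow m (a (k-1) l) j) * BB m (l+1) j
        = ∑ l ∈ Icc 1 L, ∑ j ∈ range m, C (erow m (a (k-1) (l-1)) j) * BB m l j := by
      rw [← Finset.sum_subset (Finset.Icc_subset_Icc_right hML) ?hz, sum_shift]
      · refine Finset.sum_congr rfl fun i _ => ?_
        refine Finset.sum_congr rfl fun j _ => ?_
        norm_num
      case hz =>
        intro x hx hnx
        rw [Finset.mem_Icc] at hx
        rw [Finset.mem_Icc] at hnx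
        refine Finset.sum_eq_zero fun j hj => ?_
        rw [erow_zero m _ (fun r hr => hzero (k-1) (x-1) r (Or.inr (Or.inl (by omega)))),
          map_zero, zero_mul]
    rw [hpc1, hpc2, BB_zero, add_right_comm, add_assoc, ← Finset.sum_add_distrib]
    congr 1
    refine Finset.sum_congr rfl fun l hl => ?_
    rw [Finset.mem_Icc] at hl
    rw [Finset.sum_range_succ]
    have hvm : v l m = drow m (a (k-1) l) := by simp [hv]
    rw [hvm]
    have : ∀ j ∈ range m, C (v l j) * BB m l j = C (erow m (a (k-1) (l-1)) j) * BB m l j := by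
      intro j hj
      rw [Finset.mem_range] at hj
      simp [hv, if_neg (by omega : ¬ j = m)]
    rw [Finset.sum_congr rfl this]
  -- Step D : uniqueness
  obtain ⟨h0, heq⟩ := uniq m L (a k 0 m) (drow m (a (k-1) 0)) (a k) v (hA.symm.trans hC)
  have hall : ∀ l, 1 ≤ l → ∀ r, r ≤ m → a k l r = v l r := by
    intro l h1 r hr
    rcases le_or_gt l L with hle | hgt
    · exact heq l h1 hle r hr
    · rw [hzero k l r (Or.inr (Or.inl (by omega)))]
      by_cases hrm : r = m
      · simp only [hv, if_pos hrm]
        rw [drow_zero m _ (fun s hs => hzero (k-1) l s (Or.inr (Or.inl (by omega))))]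
      · simp only [hv, if_neg hrm]
        rw [erow_zero m _ (fun s hs => hzero (k-1) (l-1) s (Or.inr (Or.inl (by omega))))]
  -- Step E : conclusions
  intro l hl
  constructor
  · intro r hr
    have hrm : r < m := by omega
    rw [hall l hl r (by omega)]
    simp only [hv, if_neg (by omega : ¬ r = m)]
    rw [erow_rec m _ r hrm]
    congr 1
    by_cases hrm1 : r + 1 = m
    · rw [erow_ge m _ (r+1) (by omega)]
      have hco : ((m:ℝ) - r - 1) = 0 := by
        rw [← hrm1]; push_cast; ring
      rw [hco]
      ring
    · rw [hall l hl (r+1) (by omega)]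
      simp [hv, if_neg hrm1]
  · rw [hall l hl m le_rfl]
    simp only [hv, if_pos rfl]
    unfold drow
    have : erow m (a (k-1) l) 0 = a k (l+1) 0 := by
      rw [hall (l+1) (by omega) 0 (by omega)]
      simp [hv, if_neg (by omega : ¬ 0 = m), Nat.add_sub_cancel]
    rw [this]
end

section
/- Let m ≥ 1. In the polynomial identity ((x−1)^{\underline{m}})^2 = a_{2,0,m}(x−1)^{\underline{m}} + Σ_{l,r} a_{2,l,r}((x)^{\underline{m+1}})^l(x+r−m−1)^{\underline{r}}, the coefficient a_{2,0,m} equals (−1)^m·m! and the coefficient a_{2,1,m−1} equals 1. -/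
open Polynomial

lemma ffall_eq (c : ℝ) (s : ℕ) :
    ffall (X + C c) s = ∏ j ∈ Finset.range s, (X + C (c - j)) := by
  unfold ffall
  refine Finset.prod_congr rfl fun j _ => ?_
  rw [map_sub, ← Polynomial.C_eq_natCast]
  ring

lemma ffall_monic_s7 (c : ℝ) (s : ℕ) : (ffall (X + C c) s).Monic := by
  rw [ffall_eq]
  exact monic_prod_of_monic _ _ fun j _ => monic_X_add_C _

lemma ffall_natDegree (c : ℝ) (s : ℕ) : (ffall (X + C c) s).natDegree = s := by
  rw [ffall_eq, natDegree_prod_of_monic _ _ fun j _ => monic_X_add_C _]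
  simp only [natDegree_X_add_C, Finset.sum_const, Finset.card_range, smul_eq_mul, mul_one]

lemma prod_one_add_nat (n : ℕ) :
    ∏ j ∈ Finset.range n, (1 + (j : ℝ)) = n.factorial := by
  induction n with
  | zero => simp
  | succ n ih =>
    rw [Finset.prod_range_succ, ih, Nat.factorial_succ]
    push_cast
    ring

/-- in the (unique) expansion
`((x-1)^{m̲})^2 = a_{2,0,m}(x-1)^{m̲} + ∑_{l=1}^{⌊2m/(m+1)⌋} ∑_{r=0}^{m} a_{2,l,r}((x)^{(m+1)̲})^l (x+r-m-1)^{r̲}`,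
we have `a_{2,0,m} = (-1)^m m!` and `a_{2,1,m-1} = 1`. -/
theorem stmt7 (m : ℕ) (hm : 1 ≤ m) (a0 : ℝ) (a : ℕ → ℕ → ℝ)
    (hexp : ffall (X - 1) m ^ 2 =
      C a0 * ffall (X - 1) m +
        ∑ l ∈ Finset.Icc 1 (m * 2 / (m + 1)), ∑ r ∈ Finset.range (m + 1),
          C (a l r) * ffall X (m + 1) ^ l *
            ffall (X + (r : Polynomial ℝ) - (m : Polynomial ℝ) - 1) r) :
    a0 = (-1 : ℝ) ^ m * Nat.factorial m ∧ a 1 (m - 1) = 1 := by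
  -- normalized forms
  have hF : ffall (X - 1) m = ffall (X + C (-1)) m := by
    congr 1
    rw [map_neg, map_one]
    ring
  have hG : ffall X (m + 1) = ffall (X + C 0) (m + 1) := by
    rw [map_zero, add_zero]
  have hH : ∀ r : ℕ, ffall (X + (r : Polynomial ℝ) - (m : Polynomial ℝ) - 1) r
      = ffall (X + C ((r : ℝ) - m - 1)) r := by
    intro r
    congr 1
    rw [map_sub, map_sub, map_one, ← Polynomial.C_eq_natCast, ← Polynomial.C_eq_natCast]
    ring
  set F := ffall (X - 1) m with hFdef
  set G := ffall X (m + 1) with hGdef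
  set H : ℕ → Polynomial ℝ :=
    fun r => ffall (X + (r : Polynomial ℝ) - (m : Polynomial ℝ) - 1) r with hHdef
  have hFm : F.Monic := by rw [hF]; exact ffall_monic_s7 _ _
  have hFd : F.natDegree = m := by rw [hF]; exact ffall_natDegree _ _
  have hGm : G.Monic := by rw [hG]; exact ffall_monic_s7 _ _
  have hGd : G.natDegree = m + 1 := by rw [hG]; exact ffall_natDegree _ _
  have hHm : ∀ r, (H r).Monic := by
    intro r
    show (ffall (X + (r : Polynomial ℝ) - (m : Polynomial ℝ) - 1) r).Monic
    rw [hH r]; exact ffall_monic_s7 _ _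
  have hHd : ∀ r, (H r).natDegree = r := by
    intro r
    show (ffall (X + (r : Polynomial ℝ) - (m : Polynomial ℝ) - 1) r).natDegree = r
    rw [hH r]; exact ffall_natDegree _ _
  have hGHm : ∀ r, (G * H r).Monic := fun r => hGm.mul (hHm r)
  have hGHd : ∀ r, (G * H r).natDegree = m + 1 + r := by
    intro r
    rw [hGm.natDegree_mul (hHm r), hGd, hHd]
  have hGHlow : ∀ r n, m + 1 + r < n → (G * H r).coeff n = 0 := by
    intro r n h
    exact coeff_eq_zero_of_natDegree_lt (by rw [hGHd]; exact h)
  have hGHtop : ∀ r, (G * H r).coeff (m + 1 + r) = 1 := by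
    intro r
    have := (hGHm r).coeff_natDegree
    rwa [hGHd] at this
  -- Part 1: evaluate at 0
  have hv : eval 0 F = (-1 : ℝ) ^ m * m.factorial := by
    show eval 0 (ffall (X - 1) m) = _
    unfold ffall
    rw [eval_prod]
    have : ∀ j ∈ Finset.range m, eval 0 ((X : Polynomial ℝ) - 1 - (j : Polynomial ℝ))
        = (-1) * (1 + (j : ℝ)) := by
      intro j _
      simp
      ring
    rw [Finset.prod_congr rfl this, Finset.prod_mul_distrib, Finset.prod_const,
      Finset.card_range, prod_one_add_nat]
  have hG0 : eval 0 G = 0 := by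
    show eval 0 (ffall X (m + 1)) = 0
    unfold ffall
    rw [eval_prod]
    refine Finset.prod_eq_zero (Finset.mem_range.2 (Nat.succ_pos m)) ?_
    simp
  have h0 := congrArg (eval 0) hexp
  simp only [eval_add, eval_mul, eval_pow, eval_C, eval_finset_sum, hv, hG0] at h0
  have hzero : ∑ l ∈ Finset.Icc 1 (m * 2 / (m + 1)), ∑ r ∈ Finset.range (m + 1),
      a l r * (0 : ℝ) ^ l * eval 0 (H r) = 0 := by
    refine Finset.sum_eq_zero fun l hl => Finset.sum_eq_zero fun r _ => ?_
    rw [zero_pow (by have := (Finset.mem_Icc.1 hl).1; omega)]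
    ring
  rw [hzero, add_zero] at h0
  have hvne : ((-1 : ℝ) ^ m * m.factorial) ≠ 0 := by
    apply mul_ne_zero
    · exact pow_ne_zero _ (by norm_num)
    · exact_mod_cast Nat.factorial_ne_zero m
  have ha0 : a0 = (-1 : ℝ) ^ m * m.factorial := by
    have h0' : a0 * ((-1 : ℝ) ^ m * m.factorial)
        = ((-1 : ℝ) ^ m * m.factorial) * ((-1 : ℝ) ^ m * m.factorial) := by
      rw [← h0]; ring
    exact mul_right_cancel₀ hvne h0'
  refine ⟨ha0, ?_⟩
  -- Part 2: compare coefficients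
  have hdiv : m * 2 / (m + 1) = 1 := Nat.div_eq_of_lt_le (by omega) (by omega)
  rw [hdiv, Finset.Icc_self, Finset.sum_singleton] at hexp
  simp only [pow_one] at hexp
  have hF2d : (F ^ 2).natDegree = 2 * m := by rw [natDegree_pow, hFd]
  -- coefficient at 2m+1 : gives a 1 m = 0
  have h1 := congrArg (fun p => coeff p (2 * m + 1)) hexp
  simp only [mul_assoc, coeff_add, coeff_C_mul, finset_sum_coeff] at h1
  rw [coeff_eq_zero_of_natDegree_lt (show (F ^ 2).natDegree < 2 * m + 1 by omega),
    coeff_eq_zero_of_natDegree_lt (show F.natDegree < 2 * m + 1 by rw [hFd]; omega)] at h1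
  have hsum1 : ∑ r ∈ Finset.range (m + 1), a 1 r * (G * H r).coeff (2 * m + 1) = a 1 m := by
    rw [Finset.sum_eq_single m]
    · have he : m + 1 + m = 2 * m + 1 := by omega
      rw [← he, hGHtop m, mul_one]
    · intro r hr hne
      rw [Finset.mem_range] at hr
      rw [hGHlow r _ (by omega), mul_zero]
    · intro h
      exact absurd (Finset.self_mem_range_succ m) h
  rw [hsum1] at h1
  have ham : a 1 m = 0 := by
    have : (0 : ℝ) = a0 * 0 + a 1 m := h1
    linarith
  -- coefficient at 2m : gives a 1 (m-1) = 1
  have h2 := congrArg (fun p => coeff p (2 * m)) hexp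
  simp only [mul_assoc, coeff_add, coeff_C_mul, finset_sum_coeff] at h2
  have hF2c : (F ^ 2).coeff (2 * m) = 1 := by
    have := (hFm.pow 2).coeff_natDegree
    rwa [hF2d] at this
  rw [hF2c,
    coeff_eq_zero_of_natDegree_lt (show F.natDegree < 2 * m by rw [hFd]; omega)] at h2
  have hsum2 : ∑ r ∈ Finset.range (m + 1), a 1 r * (G * H r).coeff (2 * m) = a 1 (m - 1) := by
    rw [Finset.sum_eq_single (m - 1)]
    · have he : m + 1 + (m - 1) = 2 * m := by omega
      rw [← he, hGHtop, mul_one]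
    · intro r hr hne
      rw [Finset.mem_range] at hr
      rcases eq_or_ne r m with rfl | hrm
      · rw [ham, zero_mul]
      · rw [hGHlow r _ (by omega), mul_zero]
    · intro h
      exact absurd (Finset.mem_range.2 (by omega)) h
  rw [hsum2] at h2
  have : (1 : ℝ) = a0 * 0 + a 1 (m - 1) := h2
  linarith
end

section
/- For any m ≥ 1 and n ≥ 2, and any point a = (a_1,…,a_n) in the grid {0,1,…,m}^n, there exists a family of exactly mn + m affine hyperplanes in ℝ^n such that every point of {0,1,…,m}^n other than a lies on at least 2 of the hyperplanes, while a lies on none of them. -/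
/-- for any `m ≥ 1`, `n ≥ 2` and any point `a` of the grid `{0,…,m}^n`,
there is a family of exactly `mn + m` affine hyperplanes in `ℝ^n` covering every grid
point other than `a` at least twice, while `a` lies on none of them. -/
theorem stmt10 (m n : ℕ) (hm : 1 ≤ m) (hn : 2 ≤ n) (a : Fin n → ℝ)
    (ha : ∀ i, ∃ j : ℕ, j ≤ m ∧ a i = (j : ℝ)) :
    ∃ (c : Fin (m * n + m) → Fin n → ℝ) (c₀ : Fin (m * n + m) → ℝ),
      (∀ j, c j ≠ 0) ∧
      (∀ x : Fin n → ℝ, (∀ i, ∃ j : ℕ, j ≤ m ∧ x i = (j : ℝ)) → x ≠ a →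
        2 ≤ Set.ncard {j | ∑ i, c j i * x i = c₀ j}) ∧
      (∀ j, ∑ i, c j i * a i ≠ c₀ j) := by
  have hm0 : 0 < m := hm
  choose a' ha'le ha'eq using ha
  -- the m values in {0,…,m} different from a' i, enumerated by v < m
  set g : Fin n → ℕ → ℕ := fun i v => if v < a' i then v else v + 1 with hgdef
  have hg_ne : ∀ i v, g i v ≠ a' i := by
    intro i v
    simp only [hgdef]
    split <;> omega
  have henc : ∀ (i : Fin n) (w : ℕ), w ≤ m → w ≠ a' i → ∃ v, v < m ∧ g i v = w := by
    intro i w hw hwa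
    rcases lt_or_gt_of_ne hwa with h | h
    · exact ⟨w, lt_of_lt_of_le h (ha'le i), by simp only [hgdef]; rw [if_pos h]⟩
    · refine ⟨w - 1, by omega, ?_⟩
      simp only [hgdef]
      rw [if_neg (by omega)]
      omega
  have hd : ∀ (i : Fin n) (k : ℕ), ((g i k : ℝ) - a i) ≠ 0 := by
    intro i k h
    rw [ha'eq i, sub_eq_zero, Nat.cast_inj] at h
    exact hg_ne i k h
  have hdiv : ∀ j : ℕ, j < m * n → j / m < n := by
    intro j hj
    rw [Nat.div_lt_iff_lt_mul hm0, mul_comm]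
    exact hj
  have hsum : ∀ (i₀ : Fin n) (y : Fin n → ℝ),
      ∑ i', (if i' = i₀ then (1:ℝ) else 0) * y i' = y i₀ := by
    intro i₀ y
    simp [ite_mul]
  -- the hyperplanes
  set C : Fin (m * n + m) → Fin n → ℝ := fun j =>
    if h : (j : ℕ) < m * n then
      (fun i => if i = (⟨(j : ℕ) / m, hdiv _ h⟩ : Fin n) then (1 : ℝ) else 0)
    else fun i => ((g i ((j : ℕ) - m * n) : ℝ) - a i)⁻¹ with hC
  set C₀ : Fin (m * n + m) → ℝ := fun j =>
    if h : (j : ℕ) < m * n then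
      ((g ⟨(j : ℕ) / m, hdiv _ h⟩ ((j : ℕ) % m) : ℕ) : ℝ)
    else (∑ i, ((g i ((j : ℕ) - m * n) : ℝ) - a i)⁻¹ * a i) + 1 with hC₀
  refine ⟨C, C₀, ?_, ?_, ?_⟩
  · -- nonzero normal vectors
    intro j
    by_cases h : (j : ℕ) < m * n
    · simp only [hC, dif_pos h]
      intro hc
      have := congrFun hc (⟨(j : ℕ) / m, hdiv _ h⟩ : Fin n)
      simp at this
    · simp only [hC, dif_neg h]
      intro hc
      have := congrFun hc ⟨0, by omega⟩
      exact hd _ _ (inv_eq_zero.mp this)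
  · -- covering every other grid point twice
    intro x hx hxa
    choose x' hx'le hx'eq using hx
    have hne : ∃ i, x i ≠ a i := by
      by_contra h
      push_neg at h
      exact hxa (funext h)
    obtain ⟨i₁, hi₁⟩ := hne
    have hval : ∀ i, x i ≠ a i → x' i ≠ a' i := by
      intro i h hcontra
      apply h
      rw [hx'eq i, ha'eq i, hcontra]
    have mk1 : ∀ (i : Fin n) (v : ℕ), v < m → (v + (i : ℕ) * m) < m * n := by
      intro i v hv
      calc v + (i : ℕ) * m < m + (i : ℕ) * m := by omega
        _ = ((i : ℕ) + 1) * m := by ring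
        _ ≤ n * m := Nat.mul_le_mul_right m i.2
        _ = m * n := mul_comm n m
    -- membership of a grid point in its axis hyperplane
    have mem1 : ∀ (i : Fin n), x i ≠ a i →
        ∃ j : Fin (m * n + m), (j : ℕ) < m * n ∧ (j : ℕ) / m = (i : ℕ) ∧
          ∑ i', C j i' * x i' = C₀ j := by
      intro i hi
      obtain ⟨v, hv, hgv⟩ := henc i (x' i) (hx'le i) (hval i hi)
      have hlt := mk1 i v hv
      set j : Fin (m * n + m) := ⟨v + (i : ℕ) * m, by omega⟩ with hjdef
      have hjval : (j : ℕ) = v + (i : ℕ) * m := rfl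
      have hjlt : (j : ℕ) < m * n := by rw [hjval]; exact hlt
      have hdq : (j : ℕ) / m = (i : ℕ) := by
        rw [hjval, Nat.add_mul_div_right _ _ hm0, Nat.div_eq_of_lt hv, zero_add]
      have hmq : (j : ℕ) % m = v := by
        rw [hjval, Nat.add_mul_mod_self_right, Nat.mod_eq_of_lt hv]
      refine ⟨j, hjlt, hdq, ?_⟩
      have hieq : (⟨(j : ℕ) / m, hdiv _ hjlt⟩ : Fin n) = i := Fin.ext hdq
      simp only [hC, hC₀, dif_pos hjlt, hieq, hmq, hgv]
      rw [hsum i x]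
      rw [hx'eq i]
    have key : ∀ (S : Set (Fin (m * n + m))) (j₁ j₂ : Fin (m * n + m)),
        j₁ ≠ j₂ → j₁ ∈ S → j₂ ∈ S → 2 ≤ S.ncard := by
      intro S j₁ j₂ hnej h1 h2
      calc 2 = ({j₁, j₂} : Set (Fin (m * n + m))).ncard := (Set.ncard_pair hnej).symm
        _ ≤ S.ncard := Set.ncard_le_ncard (by
            intro z hz
            rcases hz with hz | hz
            · exact hz ▸ h1
            · exact hz ▸ h2) (Set.toFinite S)
    by_cases hone : ∃ i₂, i₂ ≠ i₁ ∧ x i₂ ≠ a i₂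
    · -- two coordinates differ: two axis hyperplanes
      obtain ⟨i₂, hi₂ne, hi₂⟩ := hone
      obtain ⟨j₁, hj₁lt, hj₁div, hj₁mem⟩ := mem1 i₁ hi₁
      obtain ⟨j₂, hj₂lt, hj₂div, hj₂mem⟩ := mem1 i₂ hi₂
      refine key _ j₁ j₂ ?_ hj₁mem hj₂mem
      intro h
      apply hi₂ne
      apply Fin.ext
      rw [← hj₁div, ← hj₂div, h]
    · -- only i₁ differs: axis hyperplane + diagonal hyperplane
      push_neg at hone
      obtain ⟨j₁, hj₁lt, hj₁div, hj₁mem⟩ := mem1 i₁ hi₁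
      obtain ⟨v, hv, hgv⟩ := henc i₁ (x' i₁) (hx'le i₁) (hval i₁ hi₁)
      set j₂ : Fin (m * n + m) := ⟨m * n + v, by omega⟩ with hj₂def
      have hj₂nlt : ¬ ((j₂ : ℕ) < m * n) := by simp [hj₂def]
      have hj₂sub : (j₂ : ℕ) - m * n = v := by simp [hj₂def]
      refine key _ j₁ j₂ ?_ hj₁mem ?_
      · intro h
        rw [Fin.ext_iff] at h
        simp only [hj₂def] at h
        omega
      · show ∑ i, C j₂ i * x i = C₀ j₂
        simp only [hC, hC₀, dif_neg hj₂nlt, hj₂sub]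
        have hsplit : ∑ i, ((g i v : ℝ) - a i)⁻¹ * x i
            = (∑ i, ((g i v : ℝ) - a i)⁻¹ * a i)
              + ∑ i, ((g i v : ℝ) - a i)⁻¹ * (x i - a i) := by
          rw [← Finset.sum_add_distrib]
          congr 1
          funext i
          ring
        rw [hsplit]
        congr 1
        rw [Finset.sum_eq_single i₁]
        · have hx1 : x i₁ = (g i₁ v : ℝ) := by rw [hx'eq i₁, hgv]
          rw [hx1, inv_mul_cancel₀ (hd i₁ v)]
        · intro b _ hb
          rw [hone b hb, sub_self, mul_zero]
        · intro h
          exact absurd (Finset.mem_univ i₁) h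
  · -- a is on none of the hyperplanes
    intro j
    by_cases h : (j : ℕ) < m * n
    · simp only [hC, hC₀, dif_pos h]
      rw [hsum]
      rw [ha'eq]
      rw [Nat.cast_inj.ne]
      exact fun hc => hg_ne _ _ hc.symm
    · simp only [hC, hC₀, dif_neg h]
      intro hc
      have h1 : (1 : ℝ) = 0 := by linarith
      norm_num at h1
end

section
/- For any m ≥ 1, n ≥ 2, and k ≥ 2, there exists a family of mn + m·C(k,2) affine hyperplanes in ℝ^n such that every point of {0,1,…,m}^n \ {0} is covered at least k times (with multiplicity), and the origin is covered zero times. Explicitly, one may take the hyperplanes x_i = j for 1 ≤ i ≤ n and 1 ≤ j ≤ m, together with k−t−1 copies of each hyperplane x_1+⋯+x_n = s for tm+1 ≤ s ≤ (t+1)m and 0 ≤ t ≤ k−2. -/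
/-!
Let `y ∈ {0,…,m}ⁿ` be nonzero with coordinate sum `s = t m + u + 1`, `0 ≤ u < m`. Since every
coordinate is at most `m`, at least `t + 1` of them are nonzero, and each nonzero `yᵢ` lies on the
hyperplane `xᵢ = yᵢ`. The level `s` lies in `[t m + 1, (t + 1) m]`, so the hyperplane `∑ xᵢ = s`
adds `k - 1 - t` copies (none once `t ≥ k - 1`, when the coordinates alone suffice): at least `k`
in total. All constant terms are positive, so the origin is never covered.
-/

open Finset

theorem sum_range_sub_one_sub (k : ℕ) : ∑ t ∈ range k, (k - 1 - t) = k.choose 2 := by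
  induction k with
  | zero => rfl
  | succ k ih =>
    rw [sum_range_succ', Nat.choose_succ_succ', Nat.choose_one_right, ← ih]
    simp only [Nat.add_sub_cancel, Nat.sub_zero, Nat.sub_sub, Nat.add_comm 1]
    exact Nat.add_comm _ _

theorem ncard_setOf_eq_val_succ {n m : ℕ} {y : Fin n → ℕ} (hy : ∀ i, y i ≤ m) :
    {p : Fin n × Fin m | y p.1 = p.2 + 1}.ncard = #{i | y i ≠ 0} := by
  rw [← Set.ncard_coe_finset]
  refine Set.ncard_congr (fun p _ => p.1) ?_ ?_ ?_
  · intro p hp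
    simp_all
  · intro p q hp hq h
    ext <;> grind
  · intro i hi
    have : y i ≠ 0 := by simpa using hi
    exact ⟨(i, ⟨y i - 1, by grind⟩), by grind, rfl⟩

theorem Set.ncard_setOf_sum {α β : Type*} [Finite α] [Finite β] (P : α ⊕ β → Prop) :
    {j | P j}.ncard = {a | P (.inl a)}.ncard + {b | P (.inr b)}.ncard := by
  have hsplit : {j | P j} = Sum.inl '' {a | P (.inl a)} ∪ Sum.inr '' {b | P (.inr b)} := by
    ext (a | b) <;> simp
  rw [hsplit, Set.ncard_union_eq Set.disjoint_image_inl_image_inr,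
    Set.ncard_image_of_injective _ Sum.inl_injective,
    Set.ncard_image_of_injective _ Sum.inr_injective]

theorem Finset.sum_le_card_filter_ne_zero_mul {ι : Type*} [Fintype ι] {y : ι → ℕ} {m : ℕ}
    (hy : ∀ i, y i ≤ m) : ∑ i, y i ≤ #{i | y i ≠ 0} * m := by
  rw [← sum_filter_ne_zero, ← smul_eq_mul]
  exact sum_le_card_nsmul _ _ _ fun i _ => hy i

theorem sub_one_sub_le_ncard_setOf_level {m k t u : ℕ} (hu : u < m) :
    k - 1 - t ≤
      {q : (Σ t : Fin k, Fin (k - 1 - t)) × Fin m | t * m + u = q.1.1 * m + q.2}.ncard := by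
  by_cases ht : t < k
  · calc k - 1 - t = (Set.univ : Set (Fin (k - 1 - t))).ncard := by simp
      _ ≤ _ := Set.ncard_le_ncard_of_injOn (fun r => (⟨⟨t, ht⟩, r⟩, ⟨u, hu⟩)) (by simp)
          fun r _ r' _ h => by simpa using h
  · omega

/-- `inl (i, a)` indexes the hyperplane `x i = a + 1`, and `inr (⟨t, r⟩, u)` the `r`-th copy of
`x 0 + ⋯ + x (n - 1) = t * m + u + 1`, so that each level `s ∈ [t m + 1, (t + 1) m]` occurs
`k - 1 - t` times. -/
abbrev HyperplaneIndex (m n k : ℕ) : Type :=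
  (Fin n × Fin m) ⊕ ((Σ t : Fin k, Fin (k - 1 - t)) × Fin m)

namespace HyperplaneIndex

variable {m n k : ℕ}

def normal : HyperplaneIndex m n k → Fin n → ℝ
  | .inl (i, _) => Pi.single i 1
  | .inr _ => fun _ => 1

def offset : HyperplaneIndex m n k → ℝ
  | .inl (_, a) => a + 1
  | .inr (⟨t, _⟩, u) => t * m + u + 1

theorem card : Fintype.card (HyperplaneIndex m n k) = m * n + m * k.choose 2 := by
  simp only [Fintype.card_sum, Fintype.card_prod, Fintype.card_sigma, Fintype.card_fin,
    Fin.sum_univ_eq_sum_range (fun t => k - 1 - t), sum_range_sub_one_sub]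
  ring

theorem normal_ne_zero (hn : 0 < n) (j : HyperplaneIndex m n k) : normal j ≠ 0 := by
  rcases j with ⟨i, _⟩ | _
  · simp [normal]
  · exact Function.ne_iff.mpr ⟨⟨0, hn⟩, one_ne_zero⟩

theorem offset_pos (j : HyperplaneIndex m n k) : 0 < offset j := by
  rcases j with ⟨_, a⟩ | ⟨⟨t, _⟩, u⟩ <;> simp only [offset] <;> positivity

theorem sum_normal_inl_mul_eq_offset_iff (p : Fin n × Fin m) (y : Fin n → ℕ) :
    letI j : HyperplaneIndex m n k := .inl p
    ∑ i, normal j i * (y i : ℝ) = offset j ↔ y p.1 = p.2 + 1 := by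
  simp only [normal, offset, Pi.single_apply, ite_mul, one_mul, zero_mul, sum_ite_eq',
    mem_univ, if_true]
  norm_cast

theorem sum_normal_inr_mul_eq_offset_iff (q : (Σ t : Fin k, Fin (k - 1 - t)) × Fin m)
    (y : Fin n → ℕ) :
    letI j : HyperplaneIndex m n k := .inr q
    ∑ i, normal j i * (y i : ℝ) = offset j ↔ ∑ i, y i = q.1.1 * m + q.2 + 1 := by
  simp only [normal, offset, one_mul]
  norm_cast

theorem le_ncard_setOf_covered {y : Fin n → ℕ} (hy : ∀ i, y i ≤ m) (hy0 : y ≠ 0) :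
    k ≤ {j : HyperplaneIndex m n k | ∑ i, normal j i * (y i : ℝ) = offset j}.ncard := by
  obtain ⟨i₀, hi₀⟩ : ∃ i, y i ≠ 0 := Function.ne_iff.mp hy0
  have hm : 0 < m := by have := hy i₀; omega
  set s := ∑ i, y i with hs_def
  have hs : y i₀ ≤ s := single_le_sum (fun i _ => Nat.zero_le (y i)) (mem_univ i₀)
  set t := (s - 1) / m
  set u := (s - 1) % m
  have hsu : s = t * m + u + 1 := by
    have : t * m + u = s - 1 := Nat.div_add_mod' (s - 1) m
    omega
  have hsupport : t < #{i | y i ≠ 0} :=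
    (Nat.div_lt_iff_lt_mul hm).2 (by have := sum_le_card_filter_ne_zero_mul hy; omega)
  have hlevel :=
    sub_one_sub_le_ncard_setOf_level (k := k) (t := t) (u := u) (Nat.mod_lt (s - 1) hm)
  rw [Set.ncard_setOf_sum]
  simp only [sum_normal_inl_mul_eq_offset_iff, sum_normal_inr_mul_eq_offset_iff,
    ncard_setOf_eq_val_succ hy, ← hs_def, hsu, Nat.add_right_cancel_iff]
  omega

end HyperplaneIndex

theorem stmt11_general (m n k : ℕ) (hn : 2 ≤ n) :
    ∃ (c : Fin (m * n + m * Nat.choose k 2) → Fin n → ℝ)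
      (c₀ : Fin (m * n + m * Nat.choose k 2) → ℝ),
      (∀ j, c j ≠ 0) ∧
      (∀ x : Fin n → ℝ, (∀ i, ∃ j : ℕ, j ≤ m ∧ x i = (j : ℝ)) → x ≠ 0 →
        k ≤ Set.ncard {j | ∑ i, c j i * x i = c₀ j}) ∧
      (∀ j, ∑ i, c j i * (0 : ℝ) ≠ c₀ j) := by
  let e := (Fintype.equivFinOfCardEq (HyperplaneIndex.card (m := m) (n := n) (k := k))).symm
  refine ⟨fun j => (e j).normal, fun j => (e j).offset,
    fun j => (e j).normal_ne_zero (by omega), fun x hx hx0 => ?_,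
    fun j => by simpa using (e j).offset_pos.ne⟩
  choose y hym hxy using hx
  obtain rfl : x = fun i => (y i : ℝ) := funext hxy
  have hy0 : y ≠ 0 := by
    rintro rfl
    exact hx0 (funext fun _ => Nat.cast_zero)
  calc k ≤ _ := HyperplaneIndex.le_ncard_setOf_covered hym hy0
    _ = _ := (Set.ncard_congr' (e.subtypeEquiv fun _ => Iff.rfl)).symm

/-- for `m ≥ 1`, `n ≥ 2`, `k ≥ 2` there is a family of
`mn + m·C(k,2)` affine hyperplanes in `ℝ^n` covering every point of
`{0,…,m}^n \ {0}` at least `k` times (with multiplicity) and never covering the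
origin. -/
theorem stmt11 (m n k : ℕ) (hm : 1 ≤ m) (hn : 2 ≤ n) (hk : 2 ≤ k) :
    ∃ (c : Fin (m * n + m * Nat.choose k 2) → Fin n → ℝ)
      (c₀ : Fin (m * n + m * Nat.choose k 2) → ℝ),
      (∀ j, c j ≠ 0) ∧
      (∀ x : Fin n → ℝ, (∀ i, ∃ j : ℕ, j ≤ m ∧ x i = (j : ℝ)) → x ≠ 0 →
        k ≤ Set.ncard {j | ∑ i, c j i * x i = c₀ j}) ∧
      (∀ j, ∑ i, c j i * (0 : ℝ) ≠ c₀ j) :=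
  stmt11_general m n k hn
end

section
/- Let m, n, k be positive integers with k ≥ 2, and let a = (a_1,…,a_n) ∈ {0,1,…,m}^n. If H_1, …, H_N are affine hyperplanes in ℝ^n, none containing a, such that every point of {0,1,…,m}^n \ {a} is contained in at least k of them (with multiplicity), then N ≥ mn + (k−1)m. -/
/-!
Let `F = ∏ⱼ (⟨cⱼ, x⟩ - c₀ⱼ)`, of degree at most `N`, with `F a ≠ 0`. At a grid point `(s, x') ≠ a`
at least `k` factors vanish, so the restriction `F(·, x')` to the line through it parallel to the
first axis is divisible by `(X - s)^k`. Put `Q = ∏_{s ≠ a₀} (X - s)^k`, of degree `km`, and let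
`W(x')` be the coefficient of `X^{km}` in `F(·, x') mod Q·(X - a₀)`. This is a polynomial in `x'`
of degree at most `N - km`, since it only sees the coefficients of `X^d` with `d ≥ km`. It vanishes
on the grid away from `a' = (a₁, …, aₙ₋₁)`, and writing `F(·, a') = Q ψ` gives `W(a') = ψ(a₀) ≠ 0`.
The punctured Nullstellensatz of Ball and Serra, which is the case `k = 1` of the same step iterated
over the coordinates, gives `deg W ≥ m(n - 1)`, so `N ≥ km + m(n - 1)`.
-/

open scoped Polynomial
open Finset Fintype

namespace Polynomial

variable {R : Type*} [CommRing R]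

noncomputable def modCoeff (Q : R[X]) (t : R) : R[X] →ₗ[R] R :=
  (lcoeff R Q.natDegree).comp (modByMonicHom (Q * (X - C t)))

theorem modCoeff_apply (Q : R[X]) (t : R) (φ : R[X]) :
    modCoeff Q t φ = (φ %ₘ (Q * (X - C t))).coeff Q.natDegree :=
  rfl

theorem modCoeff_eq_zero_of_dvd {Q : R[X]} (hQ : Q.Monic) {t : R} {φ : R[X]}
    (h : Q * (X - C t) ∣ φ) : modCoeff Q t φ = 0 := by
  rw [modCoeff_apply, (modByMonic_eq_zero_iff_dvd (hQ.mul (monic_X_sub_C t))).2 h, coeff_zero]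

theorem X_sub_C_pow_card_dvd_prod {ι : Type*} (s : Finset ι) (f : ι → R[X]) (t : R)
    [DecidablePred fun j => (f j).IsRoot t] :
    (X - C t) ^ #{j ∈ s | (f j).IsRoot t} ∣ ∏ j ∈ s, f j := by
  rw [← prod_filter_mul_prod_filter_not s fun j => (f j).IsRoot t, ← prod_const]
  exact dvd_mul_of_dvd_left (prod_dvd_prod_of_dvd _ _ fun j hj =>
    dvd_iff_isRoot.2 (mem_filter.1 hj).2) _

variable [Nontrivial R]

theorem natDegree_mul_X_sub_C {Q : R[X]} (hQ : Q.Monic) (t : R) :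
    (Q * (X - C t)).natDegree = Q.natDegree + 1 := by
  rw [hQ.natDegree_mul (monic_X_sub_C t), natDegree_X_sub_C]

theorem modCoeff_mul_right {Q : R[X]} (hQ : Q.Monic) (t : R) (ψ : R[X]) :
    modCoeff Q t (Q * ψ) = ψ.eval t := by
  obtain ⟨χ, hχ⟩ := X_sub_C_dvd_sub_C_eval (a := t) (p := ψ)
  have hdeg : degree (C (ψ.eval t) * Q) < degree (Q * (X - C t)) := by
    refine degree_lt_degree ((natDegree_C_mul_le _ _).trans_lt ?_)
    rw [natDegree_mul_X_sub_C hQ]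
    exact Nat.lt_succ_self _
  have hrem := (div_modByMonic_unique (f := Q * ψ) χ (C (ψ.eval t) * Q)
    (hQ.mul (monic_X_sub_C t)) ⟨by linear_combination -Q * hχ, hdeg⟩).2
  rw [modCoeff_apply, hrem, coeff_C_mul, hQ.coeff_natDegree, mul_one]

theorem modCoeff_X_pow_of_lt {Q : R[X]} (hQ : Q.Monic) (t : R) {d : ℕ} (hd : d < Q.natDegree) :
    modCoeff Q t (X ^ d) = 0 := by
  have hdeg : degree ((X : R[X]) ^ d) < degree (Q * (X - C t)) := by
    refine degree_lt_degree ?_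
    rw [natDegree_X_pow, natDegree_mul_X_sub_C hQ]
    omega
  rw [modCoeff_apply, (modByMonic_eq_self_iff (hQ.mul (monic_X_sub_C t))).2 hdeg, coeff_X_pow,
    if_neg hd.ne']

theorem prod_X_sub_C_pow_dvd {K : Type*} [Field K] {T : Finset K} {k : ℕ} {φ : K[X]}
    (h : ∀ s ∈ T, (X - C s) ^ k ∣ φ) : ∏ s ∈ T, (X - C s) ^ k ∣ φ :=
  Finset.prod_dvd_of_coprime
    (fun _ _ _ _ hst => (pairwise_coprime_X_sub_C Function.injective_id hst).pow) h

end Polynomial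

namespace MvPolynomial

variable {R : Type*} [CommRing R] {n : ℕ}

theorem eval_tail_map_finSuccEquiv (F : MvPolynomial (Fin (n + 1)) R) (x : Fin (n + 1) → R) :
    ((finSuccEquiv R n F).map (eval (Fin.tail x))).eval (x 0) = eval x F := by
  rw [← eval_eq_eval_mv_eval', Fin.cons_self_tail]

noncomputable def contractFirst (ℓ : R[X] →ₗ[R] R) (F : MvPolynomial (Fin (n + 1)) R) :
    MvPolynomial (Fin n) R :=
  ∑ d ∈ (finSuccEquiv R n F).support, (finSuccEquiv R n F).coeff d * C (ℓ (Polynomial.X ^ d))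

theorem eval_contractFirst (ℓ : R[X] →ₗ[R] R) (F : MvPolynomial (Fin (n + 1)) R)
    (x : Fin n → R) : eval x (contractFirst ℓ F) = ℓ ((finSuccEquiv R n F).map (eval x)) := by
  conv_rhs => rw [(finSuccEquiv R n F).as_sum_support_C_mul_X_pow]
  simp [contractFirst, Polynomial.map_sum, map_sum, Polynomial.C_mul_X_pow_eq_monomial,
    ← Polynomial.smul_X_eq_monomial]

theorem totalDegree_contractFirst_add_le (ℓ : R[X] →ₗ[R] R) (F : MvPolynomial (Fin (n + 1)) R)
    {e : ℕ} (hℓ : ∀ d < e, ℓ (Polynomial.X ^ d) = 0) (hF : contractFirst ℓ F ≠ 0) :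
    (contractFirst ℓ F).totalDegree + e ≤ F.totalDegree := by
  set p := finSuccEquiv R n F
  have hterm : ∀ d ∈ p.support, p.coeff d * C (ℓ (Polynomial.X ^ d)) ≠ 0 →
      (p.coeff d).totalDegree + e ≤ F.totalDegree := by
    intro d hd hne
    have hed : e ≤ d := by
      by_contra! hde
      exact hne (by rw [hℓ d hde, C_0, mul_zero])
    have : (p.coeff d).totalDegree + d ≤ F.totalDegree :=
      totalDegree_coeff_finSuccEquiv_add_le F d (Polynomial.mem_support_iff.1 hd)
    omega
  obtain ⟨d₀, hd₀, hd₀ne⟩ := exists_ne_zero_of_sum_ne_zero hF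
  have heF := hterm d₀ hd₀ hd₀ne
  suffices (contractFirst ℓ F).totalDegree ≤ F.totalDegree - e by omega
  refine totalDegree_finsetSum_le (s := p.support) fun d hd => ?_
  by_cases hdne : p.coeff d * C (ℓ (Polynomial.X ^ d)) = 0
  · rw [hdne, totalDegree_zero]; exact Nat.zero_le _
  · have := hterm d hd hdne
    refine (totalDegree_mul (p.coeff d) _).trans ?_
    rw [totalDegree_C]
    omega

section Field

variable {K : Type*} [Field K]

def IsPuncturedAt (S : Fin n → Finset K) (a : Fin n → K) (F : MvPolynomial (Fin n) K) :
    Prop :=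
  a ∈ piFinset S ∧ (∀ x ∈ piFinset S, x ≠ a → eval x F = 0) ∧ eval a F ≠ 0

theorem exists_isPuncturedAt_tail_of_pow_dvd {k : ℕ} (S : Fin (n + 1) → Finset K)
    (a : Fin (n + 1) → K) (F : MvPolynomial (Fin (n + 1)) K) (hk : k ≠ 0) (ha : a ∈ piFinset S)
    (hmult : ∀ x ∈ piFinset S, x ≠ a →
      (Polynomial.X - Polynomial.C (x 0)) ^ k ∣ (finSuccEquiv K n F).map (eval (Fin.tail x)))
    (hFa : eval a F ≠ 0) :
    ∃ W, IsPuncturedAt (Fin.tail S) (Fin.tail a) W ∧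
      W.totalDegree + k * (#(S 0) - 1) ≤ F.totalDegree := by
  classical
  obtain ⟨ha0, hatail⟩ := Fin.mem_piFinset_iff_zero_tail.1 ha
  set Q := ∏ s ∈ (S 0).erase (a 0), (Polynomial.X - Polynomial.C s) ^ k
  have hQ : Q.Monic :=
    Polynomial.monic_prod_of_monic _ _ fun s _ => (Polynomial.monic_X_sub_C s).pow k
  have hQdeg : Q.natDegree = k * (#(S 0) - 1) := by
    rw [Polynomial.natDegree_prod_of_monic _ _ fun s _ => (Polynomial.monic_X_sub_C s).pow k]
    simp [card_erase_of_mem ha0, mul_comm]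
  have hdvd : ∀ x' ∈ piFinset (Fin.tail S), ∀ s ∈ S 0, Fin.cons s x' ≠ a →
      (Polynomial.X - Polynomial.C s) ^ k ∣ (finSuccEquiv K n F).map (eval x') := by
    intro x' hx' s hs hne
    simpa using hmult (Fin.cons s x')
      (by rw [Fin.mem_piFinset_iff_zero_tail, Fin.cons_zero, Fin.tail_cons]; exact ⟨hs, hx'⟩) hne
  set W := contractFirst (Polynomial.modCoeff Q (a 0)) F
  have hW_zero : ∀ x' ∈ piFinset (Fin.tail S), x' ≠ Fin.tail a → eval x' W = 0 := by
    intro x' hx' hne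
    rw [eval_contractFirst]
    refine Polynomial.modCoeff_eq_zero_of_dvd hQ (dvd_trans ?_
      (Polynomial.prod_X_sub_C_pow_dvd fun s hs => hdvd x' hx' s hs ?_))
    · rw [← mul_prod_erase _ _ ha0, mul_comm]
      exact mul_dvd_mul (dvd_pow_self _ hk) dvd_rfl
    · rintro rfl
      exact hne (by rw [Fin.tail_cons])
  have hW_a : eval (Fin.tail a) W ≠ 0 := by
    obtain ⟨ψ, hψ⟩ : Q ∣ (finSuccEquiv K n F).map (eval (Fin.tail a)) :=
      Polynomial.prod_X_sub_C_pow_dvd fun s hs => hdvd _ hatail s (mem_of_mem_erase hs)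
        fun h => ne_of_mem_erase hs (by simpa using congr_fun h 0)
    rw [eval_contractFirst, hψ, Polynomial.modCoeff_mul_right hQ]
    intro hψa
    apply hFa
    rw [← eval_tail_map_finSuccEquiv, hψ, Polynomial.eval_mul, hψa, mul_zero]
  refine ⟨W, ⟨hatail, hW_zero, hW_a⟩, hQdeg ▸ ?_⟩
  exact totalDegree_contractFirst_add_le _ F
    (fun d hd => Polynomial.modCoeff_X_pow_of_lt hQ _ hd)
    fun h => hW_a (by rw [show W = 0 from h, map_zero])

theorem IsPuncturedAt.sum_card_sub_one_le_totalDegree {S : Fin n → Finset K}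
    {a : Fin n → K} {F : MvPolynomial (Fin n) K} (hF : IsPuncturedAt S a F) :
    ∑ i, (#(S i) - 1) ≤ F.totalDegree := by
  induction n with
  | zero => simp
  | succ n ih =>
    obtain ⟨ha, hzero, hFa⟩ := hF
    obtain ⟨W, hW, hdeg⟩ := exists_isPuncturedAt_tail_of_pow_dvd S a F one_ne_zero ha
      (fun x hx hxa => by
        rw [pow_one, Polynomial.dvd_iff_isRoot, Polynomial.IsRoot, eval_tail_map_finSuccEquiv]
        exact hzero x hx hxa) hFa
    have := ih hW
    rw [Fin.sum_univ_succ]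
    simp only [Fin.tail] at this
    omega

theorem sum_card_sub_one_le_totalDegree_of_pow_dvd {k : ℕ} (S : Fin (n + 1) → Finset K)
    (a : Fin (n + 1) → K) (F : MvPolynomial (Fin (n + 1)) K) (hk : k ≠ 0) (ha : a ∈ piFinset S)
    (hmult : ∀ x ∈ piFinset S, x ≠ a →
      (Polynomial.X - Polynomial.C (x 0)) ^ k ∣ (finSuccEquiv K n F).map (eval (Fin.tail x)))
    (hFa : eval a F ≠ 0) :
    k * (#(S 0) - 1) + ∑ i : Fin n, (#(S i.succ) - 1) ≤ F.totalDegree := by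
  obtain ⟨W, hW, hdeg⟩ := exists_isPuncturedAt_tail_of_pow_dvd S a F hk ha hmult hFa
  have := hW.sum_card_sub_one_le_totalDegree
  simp only [Fin.tail] at this
  omega

end Field

section AffineForm

variable {σ : Type*} [Fintype σ]

noncomputable def affineForm (c : σ → R) (c₀ : R) : MvPolynomial σ R :=
  ∑ i, C (c i) * X i - C c₀

@[simp]
theorem eval_affineForm (c : σ → R) (c₀ : R) (x : σ → R) :
    eval x (affineForm c c₀) = ∑ i, c i * x i - c₀ := by
  simp [affineForm]

theorem totalDegree_affineForm_le (c : σ → R) (c₀ : R) : (affineForm c c₀).totalDegree ≤ 1 :=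
  (totalDegree_sub_C_le _ _).trans
    (IsHomogeneous.sum _ _ _ fun i _ => isHomogeneous_C_mul_X (c i) i).totalDegree_le

theorem X_sub_C_pow_ncard_dvd_prod_affineForm {ι : Type*} [Fintype ι]
    (c : ι → Fin (n + 1) → R) (c₀ : ι → R) (x : Fin (n + 1) → R) :
    (Polynomial.X - Polynomial.C (x 0)) ^ {j | ∑ i, c j i * x i = c₀ j}.ncard ∣
      (finSuccEquiv R n (∏ j, affineForm (c j) (c₀ j))).map (eval (Fin.tail x)) := by
  classical
  rw [map_prod, Polynomial.map_prod]
  convert Polynomial.X_sub_C_pow_card_dvd_prod univ _ (x 0) using 2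
  rw [← Set.ncard_coe_finset]
  congr 1
  ext j
  simp [Polynomial.IsRoot, eval_tail_map_finSuccEquiv, sub_eq_zero]

end AffineForm

end MvPolynomial

open MvPolynomial

theorem stmt12_general (m n k N : ℕ) (hn : 1 ≤ n) (hk : 2 ≤ k)
    (a : Fin n → ℝ) (ha : ∀ i, ∃ j : ℕ, j ≤ m ∧ a i = (j : ℝ))
    (c : Fin N → Fin n → ℝ) (c₀ : Fin N → ℝ)
    (havoid : ∀ j, ∑ i, c j i * a i ≠ c₀ j)
    (hcover : ∀ x : Fin n → ℝ, (∀ i, ∃ j : ℕ, j ≤ m ∧ x i = (j : ℝ)) → x ≠ a →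
      k ≤ Set.ncard {j | ∑ i, c j i * x i = c₀ j}) :
    m * n + (k - 1) * m ≤ N := by
  obtain ⟨n, rfl⟩ : ∃ n', n = n' + 1 := ⟨n - 1, by omega⟩
  set S : Fin (n + 1) → Finset ℝ := fun _ => (range (m + 1)).image Nat.cast
  have hS : ∀ x, x ∈ piFinset S ↔ ∀ i, ∃ j : ℕ, j ≤ m ∧ x i = j := by
    simp [S, eq_comm]
  have hcard : ∀ i, #(S i) = m + 1 := fun _ => by
    simp [S, card_image_of_injective _ Nat.cast_injective]
  set F := ∏ j, affineForm (c j) (c₀ j)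
  have hFa : eval a F ≠ 0 := by
    simpa [F, prod_ne_zero_iff, sub_eq_zero] using havoid
  have hF : F.totalDegree ≤ N := (totalDegree_finsetProd _ _).trans
    ((sum_le_sum fun j _ => totalDegree_affineForm_le (c j) (c₀ j)).trans_eq (by simp))
  have hdeg := sum_card_sub_one_le_totalDegree_of_pow_dvd S a F (by omega : k ≠ 0) ((hS a).2 ha)
    (fun x hx hxa => (pow_dvd_pow _ (hcover x ((hS x).1 hx) hxa)).trans
      (X_sub_C_pow_ncard_dvd_prod_affineForm c c₀ x)) hFa
  simp only [hcard, add_tsub_cancel_right, sum_const, card_univ, Fintype.card_fin, smul_eq_mul]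
    at hdeg
  obtain ⟨k, rfl⟩ : ∃ k', k = k' + 1 := ⟨k - 1, by omega⟩
  simp only [add_tsub_cancel_right]
  linarith

/-- if `N` affine hyperplanes in `ℝ^n`, none through a grid point `a`,
cover every point of `{0,…,m}^n \ {a}` at least `k` times (with multiplicity),
then `N ≥ mn + (k-1)m`. -/
theorem stmt12 (m n k N : ℕ) (hm : 1 ≤ m) (hn : 1 ≤ n) (hk : 2 ≤ k)
    (a : Fin n → ℝ) (ha : ∀ i, ∃ j : ℕ, j ≤ m ∧ a i = (j : ℝ))
    (c : Fin N → Fin n → ℝ) (c₀ : Fin N → ℝ)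
    (hne : ∀ j, c j ≠ 0)
    (havoid : ∀ j, ∑ i, c j i * a i ≠ c₀ j)
    (hcover : ∀ x : Fin n → ℝ, (∀ i, ∃ j : ℕ, j ≤ m ∧ x i = (j : ℝ)) → x ≠ a →
      k ≤ Set.ncard {j | ∑ i, c j i * x i = c₀ j}) :
    m * n + (k - 1) * m ≤ N :=
  stmt12_general m n k N hn hk a ha c c₀ havoid hcover
end

section
/- Let n ≥ 2 and m ≥ 1. The minimum number of affine hyperplanes in ℝ^n that cover every point of {0,1,…,m}^n \ {0} at least twice (with multiplicity) while avoiding the origin is exactly mn + m. -/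
/-!
For the upper bound take the hyperplanes `x i = k` and `∑ i, x i = k` for `1 ≤ k ≤ m`: a nonzero
grid point lies on the coordinate hyperplanes of its nonzero coordinates, and also on a sum
hyperplane when it has only one.

For the lower bound (polynomial method), let `P` be the product of the `N` affine forms. Then
`totalDegree P ≤ N`, `P 0 ≠ 0`, and `P` and `∂P/∂x₀` vanish at every nonzero grid point. Duality
on univariate polynomials gives weights `w` on `{0,…,m}` with `w 0 = 1` annihilating `tᵏ` for
`k < m`, and `A, B` with `A 0 = 1`, `B 0 = 0` such that `∑ₜ A t f(t) + B t f'(t) = 0` whenever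
`deg f < 2m`. The functional `Q ↦ ∑ₐ ∏_{i > 0} w (a i) (A (a 0) Q(a) + B (a 0) ∂₀Q(a))` then
vanishes on every monomial of degree `< m n + m`, since one of its one-dimensional factors
does, but equals `P 0` on `P`.
-/

lemma Submodule.exists_eq_sum_mul_of_forall_eq_zero {K V ι : Type*} [Field K] [AddCommGroup V]
    [Module K V] [Fintype ι] (W : Submodule K V) (ℓ : ι → V →ₗ[K] K) (φ : V →ₗ[K] K)
    (h : ∀ v ∈ W, (∀ s, ℓ s v = 0) → φ v = 0) :
    ∃ u : ι → K, ∀ v ∈ W, φ v = ∑ s, u s * ℓ s v := by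
  have hker : ⨅ s, LinearMap.ker (ℓ s ∘ₗ W.subtype) ≤ LinearMap.ker (φ ∘ₗ W.subtype) :=
    fun v hv ↦ h v v.2 fun s ↦ (Submodule.mem_iInf _).1 hv s
  obtain ⟨u, hu⟩ := (mem_span_range_iff_exists_fun K).1 (mem_span_of_iInf_ker_le_ker hker)
  exact ⟨u, fun v hv ↦ by simpa using (LinearMap.congr_fun hu ⟨v, hv⟩).symm⟩

section Univariate

open Polynomial

lemma Polynomial.eq_zero_of_natDegree_lt_two_mul_card_of_eval_eq_zero {K ι : Type*} [Field K]
    [Fintype ι] (p : K[X]) {r : ι → K} (hr : Function.Injective r)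
    (heval : ∀ i, p.eval (r i) = 0 ∧ p.derivative.eval (r i) = 0)
    (hcard : p.natDegree < 2 * Fintype.card ι) : p = 0 := by
  by_contra hp
  have hdvd : ∏ i, (X - C (r i)) ^ 2 ∣ p := by
    refine Finset.prod_dvd_of_coprime (fun i _ j _ hij ↦ (pairwise_coprime_X_sub_C hr hij).pow)
      fun i _ ↦ (le_rootMultiplicity_iff hp).1 ?_
    exact (one_lt_rootMultiplicity_iff_isRoot hp).2 (heval i)
  have := natDegree_le_of_dvd hdvd hp
  simp [natDegree_prod _ _ fun i _ ↦ pow_ne_zero 2 (X_sub_C_ne_zero (r i))] at this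
  lia

variable (K : Type*) [Field K] [CharZero K] (m : ℕ)

lemma natCast_val_add_one_injective : Function.Injective fun t : Fin m ↦ ((t : ℕ) : K) + 1 :=
  fun s t hst ↦ Fin.ext (by simpa using hst)

lemma exists_vanishing_moments :
    ∃ w : Fin (m + 1) → K, w 0 = 1 ∧ ∀ k < m, ∑ t, w t * ((t : ℕ) : K) ^ k = 0 := by
  obtain ⟨u, hu⟩ := Submodule.exists_eq_sum_mul_of_forall_eq_zero (degreeLT K m)
    (fun t : Fin m ↦ leval (((t : ℕ) : K) + 1)) (leval 0) fun p hp hroots ↦ by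
      by_cases h0 : p = 0
      · simp [h0]
      refine absurd (eq_zero_of_natDegree_lt_card_of_eval_eq_zero p
        (natCast_val_add_one_injective K m) hroots ?_) h0
      simpa using (natDegree_lt_iff_degree_lt h0).2 (mem_degreeLT.1 hp)
  refine ⟨Fin.cons 1 fun t ↦ -u t, rfl, fun k hk ↦ ?_⟩
  have := hu (X ^ k) (by simpa [mem_degreeLT] using hk)
  simp [Fin.sum_univ_succ] at this ⊢
  linear_combination this

lemma exists_vanishing_hermite_moments :
    ∃ A B : Fin (m + 1) → K, A 0 = 1 ∧ B 0 = 0 ∧ ∀ k < 2 * m,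
      ∑ t, (A t * ((t : ℕ) : K) ^ k + B t * (k * ((t : ℕ) : K) ^ (k - 1))) = 0 := by
  obtain ⟨u, hu⟩ := Submodule.exists_eq_sum_mul_of_forall_eq_zero (degreeLT K (2 * m))
    (Sum.elim (fun t : Fin m ↦ leval (((t : ℕ) : K) + 1))
      fun t : Fin m ↦ leval (((t : ℕ) : K) + 1) ∘ₗ derivative) (leval 0) fun p hp hroots ↦ by
      by_cases h0 : p = 0
      · simp [h0]
      refine absurd (eq_zero_of_natDegree_lt_two_mul_card_of_eval_eq_zero p
        (natCast_val_add_one_injective K m) (fun t ↦ ⟨hroots (.inl t), hroots (.inr t)⟩) ?_) h0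
      simpa using (natDegree_lt_iff_degree_lt h0).2 (mem_degreeLT.1 hp)
  refine ⟨Fin.cons 1 fun t ↦ -u (.inl t), Fin.cons 0 fun t ↦ -u (.inr t), rfl, rfl,
    fun k hk ↦ ?_⟩
  have := hu (X ^ k) (by rw [mem_degreeLT, degree_X_pow]; exact_mod_cast hk)
  simp [Fin.sum_univ_succ, derivative_X_pow, Finset.sum_add_distrib] at this ⊢
  linear_combination this

end Univariate

section Grid

open MvPolynomial

variable {K σ : Type*} [Field K] [Fintype σ] [DecidableEq σ] (m : ℕ)

noncomputable def gridSum (u : σ → Fin (m + 1) → K) : MvPolynomial σ K →ₗ[K] K :=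
  ∑ a : σ → Fin (m + 1), (∏ i, u i (a i)) • (aeval fun i ↦ ((a i : ℕ) : K)).toLinearMap

lemma gridSum_apply (u : σ → Fin (m + 1) → K) (p : MvPolynomial σ K) :
    gridSum m u p =
      ∑ a : σ → Fin (m + 1), (∏ i, u i (a i)) * eval (fun i ↦ ((a i : ℕ) : K)) p := by
  simp [gridSum]

lemma gridSum_monomial (u : σ → Fin (m + 1) → K) (γ : σ →₀ ℕ) (r : K) :
    gridSum m u (monomial γ r) = r * ∏ i, ∑ t, u i t * ((t : ℕ) : K) ^ γ i := by
  simp only [gridSum_apply, eval_monomial, Finsupp.prod_fintype _ _ fun _ ↦ pow_zero _,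
    Finset.prod_univ_sum, Finset.mul_sum, Finset.prod_mul_distrib]
  exact Finset.sum_congr rfl fun a _ ↦ by ring

variable {n : ℕ}

noncomputable def gridFunctional (A B w : Fin (m + 1) → K) :
    MvPolynomial (Fin (n + 1)) K →ₗ[K] K :=
  gridSum m (Fin.cons A fun _ ↦ w) + gridSum m (Fin.cons B fun _ ↦ w) ∘ₗ (pderiv 0).toLinearMap

lemma gridFunctional_monomial (A B w : Fin (m + 1) → K) (γ : Fin (n + 1) →₀ ℕ) (r : K) :
    gridFunctional m A B w (monomial γ r) =
      r * (∑ t, (A t * ((t : ℕ) : K) ^ γ 0 + B t * (γ 0 * ((t : ℕ) : K) ^ (γ 0 - 1)))) *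
        ∏ i : Fin n, ∑ t, w t * ((t : ℕ) : K) ^ γ i.succ := by
  simp [gridFunctional, gridSum_monomial, pderiv_monomial, Fin.prod_univ_succ,
    Finset.sum_add_distrib, mul_left_comm (B _), ← Finset.mul_sum]
  ring

lemma gridFunctional_eq_zero_of_totalDegree_lt {A B w : Fin (m + 1) → K}
    (hAB : ∀ k < 2 * m,
      ∑ t, (A t * ((t : ℕ) : K) ^ k + B t * (k * ((t : ℕ) : K) ^ (k - 1))) = 0)
    (hw : ∀ k < m, ∑ t, w t * ((t : ℕ) : K) ^ k = 0)
    {P : MvPolynomial (Fin (n + 1)) K} (hP : P.totalDegree < m * (n + 1) + m) :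
    gridFunctional m A B w P = 0 := by
  rw [P.as_sum, map_sum]
  refine Finset.sum_eq_zero fun γ hγ ↦ ?_
  have hdeg : γ 0 + ∑ i : Fin n, γ i.succ < 2 * m + n * m := by
    have := le_totalDegree hγ
    rw [Finsupp.sum_fintype _ _ fun _ ↦ rfl, Fin.sum_univ_succ] at this
    linarith
  rw [gridFunctional_monomial]
  by_cases h0 : γ 0 < 2 * m
  · simp [hAB _ h0]
  obtain ⟨i, hi⟩ : ∃ i : Fin n, γ i.succ < m := by
    by_contra! h
    have := Finset.card_nsmul_le_sum Finset.univ (fun i : Fin n ↦ γ i.succ) m fun i _ ↦ h i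
    simp at this
    lia
  exact mul_eq_zero_of_right _ (Finset.prod_eq_zero_iff.2 ⟨i, Finset.mem_univ _, hw _ hi⟩)

lemma gridFunctional_eq_eval_zero {A B w : Fin (m + 1) → K}
    (hA : A 0 = 1) (hB : B 0 = 0) (hw : w 0 = 1) {P : MvPolynomial (Fin (n + 1)) K}
    (hP : ∀ a : Fin (n + 1) → Fin (m + 1), a ≠ 0 →
      eval (fun i ↦ ((a i : ℕ) : K)) P = 0 ∧ eval (fun i ↦ ((a i : ℕ) : K)) (pderiv 0 P) = 0) :
    gridFunctional m A B w P = eval 0 P := by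
  simp only [gridFunctional, LinearMap.add_apply, LinearMap.comp_apply, gridSum_apply,
    ← Finset.sum_add_distrib]
  rw [Finset.sum_eq_single_of_mem 0 (Finset.mem_univ _) fun a _ ha ↦ by simp [hP a ha]]
  simp [Fin.prod_univ_succ, hA, hB, hw]

theorem le_totalDegree_of_eval_eq_zero_of_eval_pderiv_eq_zero [CharZero K]
    {P : MvPolynomial (Fin (n + 1)) K}
    (hP : ∀ a : Fin (n + 1) → Fin (m + 1), a ≠ 0 →
      eval (fun i ↦ ((a i : ℕ) : K)) P = 0 ∧ eval (fun i ↦ ((a i : ℕ) : K)) (pderiv 0 P) = 0)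
    (h0 : eval 0 P ≠ 0) : m * (n + 1) + m ≤ P.totalDegree := by
  obtain ⟨w, hw0, hw⟩ := exists_vanishing_moments K m
  obtain ⟨A, B, hA0, hB0, hAB⟩ := exists_vanishing_hermite_moments K m
  by_contra! hdeg
  exact h0 <| (gridFunctional_eq_eval_zero m hA0 hB0 hw0 hP).symm.trans
    (gridFunctional_eq_zero_of_totalDegree_lt m hAB hw hdeg)

end Grid

section Hyperplanes

open MvPolynomial

variable {K ι : Type*} [Field K] {n : ℕ}

def CoversGridTwice (m : ℕ) (c : ι → Fin n → K) (c₀ : ι → K) : Prop :=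
  ∀ x : Fin n → K, (∀ i, ∃ j : ℕ, j ≤ m ∧ x i = j) → x ≠ 0 →
    2 ≤ Set.ncard {j | ∑ i, c j i * x i = c₀ j}

variable {m : ℕ}

lemma CoversGridTwice.comp_equiv {ι' : Type*} {c : ι → Fin n → K} {c₀ : ι → K}
    (hcov : CoversGridTwice m c c₀) (e : ι' ≃ ι) : CoversGridTwice m (c ∘ e) (c₀ ∘ e) := by
  intro x hx hx0
  have := hcov x hx hx0
  rwa [← Set.ncard_preimage_of_injective_subset_range e.injective (by simp)] at this

lemma MvPolynomial.eval_pderiv_prod_eq_zero {σ R : Type*} [CommRing R] [Fintype ι]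
    [DecidableEq ι] {f : ι → MvPolynomial σ R} {x : σ → R} {j₁ j₂ : ι} (hne : j₁ ≠ j₂)
    (h₁ : eval x (f j₁) = 0) (h₂ : eval x (f j₂) = 0) (i : σ) :
    eval x (pderiv i (∏ j, f j)) = 0 := by
  obtain ⟨g, hg⟩ : f j₁ * f j₂ ∣ ∏ j, f j := by
    rw [← Finset.prod_pair hne]
    exact Finset.prod_dvd_prod_of_subset _ _ _ (Finset.subset_univ _)
  simp [hg, h₁, h₂]

variable [Fintype ι]

noncomputable def hyperplaneProduct (c : ι → Fin n → K) (c₀ : ι → K) : MvPolynomial (Fin n) K :=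
  ∏ j, (C (c₀ j) - ∑ i, C (c j i) * X i)

lemma totalDegree_hyperplaneProduct_le (c : ι → Fin n → K) (c₀ : ι → K) :
    (hyperplaneProduct c c₀).totalDegree ≤ Fintype.card ι := by
  refine (totalDegree_finsetProd _ _).trans ?_
  rw [Fintype.card_eq_sum_ones]
  refine Finset.sum_le_sum fun j _ ↦ ?_
  refine (totalDegree_sub _ _).trans (max_le (by simp) ?_)
  refine (totalDegree_finsetSum _ _).trans (Finset.sup_le fun i _ ↦ ?_)
  exact (totalDegree_mul _ _).trans (by simp [totalDegree_X])

theorem CoversGridTwice.le_card [CharZero K] {c : ι → Fin (n + 1) → K} {c₀ : ι → K}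
    (hcov : CoversGridTwice m c c₀) (h0 : ∀ j, c₀ j ≠ 0) :
    m * (n + 1) + m ≤ Fintype.card ι := by
  classical
  have hP : ∀ a : Fin (n + 1) → Fin (m + 1), a ≠ 0 →
      eval (fun i ↦ ((a i : ℕ) : K)) (hyperplaneProduct c c₀) = 0 ∧
      eval (fun i ↦ ((a i : ℕ) : K)) (pderiv 0 (hyperplaneProduct c c₀)) = 0 := by
    intro a ha
    have hx0 : (fun i ↦ ((a i : ℕ) : K)) ≠ 0 := fun h ↦ ha <| funext fun i ↦
      Fin.ext <| by simpa using congrFun h i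
    obtain ⟨j₁, h₁, j₂, h₂, hne⟩ := (Set.one_lt_ncard (Set.toFinite _)).1
      (hcov _ (fun i ↦ ⟨a i, Fin.is_le _, rfl⟩) hx0)
    have hzero : ∀ j ∈ {j | ∑ i, c j i * ((a i : ℕ) : K) = c₀ j},
        eval (fun i ↦ ((a i : ℕ) : K)) (C (c₀ j) - ∑ i, C (c j i) * X i) = 0 := fun j hj ↦ by
      simp [← show _ = c₀ j from hj]
    unfold hyperplaneProduct
    refine ⟨?_, eval_pderiv_prod_eq_zero (f := fun j ↦ C (c₀ j) - ∑ i, C (c j i) * X i) hne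
      (hzero j₁ h₁) (hzero j₂ h₂) 0⟩
    rw [eval_prod]
    exact Finset.prod_eq_zero_iff.2 ⟨j₁, Finset.mem_univ _, hzero j₁ h₁⟩
  have hP0 : eval 0 (hyperplaneProduct c c₀) ≠ 0 := by
    simp [hyperplaneProduct, Finset.prod_eq_zero_iff, h0]
  exact (le_totalDegree_of_eval_eq_zero_of_eval_pderiv_eq_zero m hP hP0).trans
    (totalDegree_hyperplaneProduct_le c c₀)

end Hyperplanes

section Construction

variable {K : Type*} [Field K] {m n : ℕ}

/-- The hyperplanes `x i = k + 1`, indexed by `inl (i, k)`, and `∑ i, x i = k + 1`, indexed by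
`inr k`. -/
def axisSumNormal : Fin n × Fin m ⊕ Fin m → Fin n → K :=
  Sum.elim (fun p ↦ Pi.single p.1 1) fun _ ↦ 1

def axisSumOffset : Fin n × Fin m ⊕ Fin m → K :=
  Sum.elim (fun p ↦ ((p.2 : ℕ) : K) + 1) fun k ↦ ((k : ℕ) : K) + 1

lemma axisSumNormal_ne_zero [NeZero n] (j : Fin n × Fin m ⊕ Fin m) :
    (axisSumNormal j : Fin n → K) ≠ 0 := by
  cases j <;> simp [axisSumNormal]

lemma axisSumOffset_ne_zero [CharZero K] (j : Fin n × Fin m ⊕ Fin m) :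
    (axisSumOffset j : K) ≠ 0 := by
  cases j <;> simp [axisSumOffset] <;> norm_cast

lemma coversGridTwice_axisSum [CharZero K] :
    CoversGridTwice m (axisSumNormal (K := K) (m := m) (n := n)) axisSumOffset := by
  intro x hx hx0
  choose v hvm hxv using hx
  obtain rfl : x = fun i ↦ (v i : K) := funext hxv
  obtain ⟨i₁, hi₁⟩ : ∃ i, v i ≠ 0 := by
    by_contra! h
    exact hx0 (funext fun i ↦ by simp [h i])
  have hlt : ∀ i, v i ≠ 0 → v i - 1 < m := fun i hi ↦ by have := hvm i; omega
  have haxis : ∀ i (hi : v i ≠ 0), .inl (i, ⟨v i - 1, hlt i hi⟩) ∈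
      {j | ∑ i, axisSumNormal j i * (v i : K) = axisSumOffset j} := fun i hi ↦ by
    simp [axisSumNormal, axisSumOffset, Pi.single_apply,
      Nat.cast_sub (Nat.one_le_iff_ne_zero.2 hi)]
  refine (Set.one_lt_ncard (Set.toFinite _)).2 ⟨_, haxis i₁ hi₁, ?_⟩
  by_cases h : ∃ i₂, i₂ ≠ i₁ ∧ v i₂ ≠ 0
  · obtain ⟨i₂, hne, hi₂⟩ := h
    exact ⟨_, haxis i₂ hi₂, by simp [hne.symm]⟩
  push Not at h
  refine ⟨.inr ⟨v i₁ - 1, hlt i₁ hi₁⟩, ?_, Sum.inl_ne_inr⟩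
  have hsum : ∑ i, (v i : K) = v i₁ :=
    Finset.sum_eq_single i₁ (fun i _ hi ↦ by simp [h i hi]) (by simp)
  simp [axisSumNormal, axisSumOffset, hsum, Nat.cast_sub (Nat.one_le_iff_ne_zero.2 hi₁)]

end Construction

theorem stmt13_general (m n : ℕ) (hn : 2 ≤ n) :
    IsLeast {N : ℕ | ∃ (c : Fin N → Fin n → ℝ) (c₀ : Fin N → ℝ),
        (∀ j, c j ≠ 0) ∧
        (∀ x : Fin n → ℝ, (∀ i, ∃ j : ℕ, j ≤ m ∧ x i = (j : ℝ)) → x ≠ 0 →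
          2 ≤ Set.ncard {j | ∑ i, c j i * x i = c₀ j}) ∧
        (∀ j, ∑ i, c j i * (0 : ℝ) ≠ c₀ j)}
      (m * n + m) := by
  obtain ⟨n, rfl⟩ : ∃ k, n = k + 1 := ⟨n - 1, by omega⟩
  refine ⟨?_, ?_⟩
  · let e : Fin (m * (n + 1) + m) ≃ Fin (n + 1) × Fin m ⊕ Fin m :=
      Fintype.equivOfCardEq (by simp [mul_comm])
    exact ⟨axisSumNormal ∘ e, axisSumOffset ∘ e, fun j ↦ axisSumNormal_ne_zero (e j),
      coversGridTwice_axisSum.comp_equiv e,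
      fun j ↦ by simpa using (axisSumOffset_ne_zero (e j)).symm⟩
  · rintro N ⟨c, c₀, -, hcov, h0⟩
    simpa using CoversGridTwice.le_card hcov fun j ↦ by simpa [eq_comm] using h0 j

/-- for `n ≥ 2` and `m ≥ 1`, the minimum number of affine hyperplanes
in `ℝ^n` covering every point of `{0,…,m}^n \ {0}` at least twice (with multiplicity)
while avoiding the origin is exactly `mn + m`, i.e. `f_m(n,2) = mn + m`. -/
theorem stmt13 (m n : ℕ) (hm : 1 ≤ m) (hn : 2 ≤ n) :
    IsLeast {N : ℕ | ∃ (c : Fin N → Fin n → ℝ) (c₀ : Fin N → ℝ),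
        (∀ j, c j ≠ 0) ∧
        (∀ x : Fin n → ℝ, (∀ i, ∃ j : ℕ, j ≤ m ∧ x i = (j : ℝ)) → x ≠ 0 →
          2 ≤ Set.ncard {j | ∑ i, c j i * x i = c₀ j}) ∧
        (∀ j, ∑ i, c j i * (0 : ℝ) ≠ c₀ j)}
      (m * n + m) :=
  stmt13_general m n hn
end

section
/- Let m ≥ 1, k ≥ 2, n ≥ 1, and let P ∈ ℝ[x_1,…,x_n]. Then there exists a unique polynomial P_0 of degree at most mn+(m+1)(k−1)−1 having no monomial divisible by any x_{i_1}^{m+1}⋯x_{i_k}^{m+1}, such that P − P_0 vanishes to order at least k at every point of {0,1,…,m}^n \ {0} and to order at least k−1 at the origin. Moreover deg P_0 ≤ deg P. -/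
open MvPolynomial

/-- Iterated partial derivative with multi-index `d`. -/
noncomputable def pderivMulti {n : ℕ} (d : Fin n → ℕ) (P : MvPolynomial (Fin n) ℝ) :
    MvPolynomial (Fin n) ℝ :=
  (List.finRange n).foldl (fun Q i => (fun R => MvPolynomial.pderiv i R)^[d i] Q) P

/-- `P` vanishes to order at least `k` at `a`. -/
def VanishesToOrder {n : ℕ} (P : MvPolynomial (Fin n) ℝ) (a : Fin n → ℝ) (k : ℕ) : Prop :=
  ∀ d : Fin n → ℕ, ∑ i, d i < k → MvPolynomial.eval a (pderivMulti d P) = 0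

/-- `P` is `(m,k)`-reduced: `deg P ≤ mn + (m+1)(k-1) - 1` and no monomial of `P` is
divisible by a product `x_{i₁}^{m+1} ⋯ x_{i_k}^{m+1}`. -/
def IsMKReduced (m k n : ℕ) (P : MvPolynomial (Fin n) ℝ) : Prop :=
  P.totalDegree ≤ m * n + (m + 1) * (k - 1) - 1 ∧
  ∀ d ∈ P.support, ¬ ∃ f : Fin k → Fin n,
    ∀ i, (m + 1) * (Finset.univ.filter (fun j => f j = i)).card ≤ d i

/-!
Vanishing to order `r` at `a` means that the Taylor coefficients of `P(x + a)` of degree `< r`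
vanish, so the conditions on `P - P₀` say that it lies in `⋂ₐ 𝔪ₐ ^ r(a)` over the grid points `a`,
with `r(0) = k - 1` and `r(a) = k` otherwise.

Existence and the degree bound: with `gᵢ = xᵢ (xᵢ - 1) ⋯ (xᵢ - m)` and `ĝᵢ = (xᵢ - 1) ⋯ (xᵢ - m)`,
every non-reduced monomial `x^d` is the top-degree part of an element of that ideal, namely
`x^w ∏ gᵢ ^ qᵢ` with `∑ qᵢ = k` if `x^d` is divisible by such a product, and otherwise (when `d`
exceeds the degree bound, which forces `dᵢ = (m + 1) qᵢ + m` with `∑ qᵢ = k - 1`)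
`∏ gᵢ ^ qᵢ ĝᵢ`. Induction on the degree then reduces `P`.

Uniqueness is a dimension count: `d ↦ (⌊d / (m + 1)⌋, m - d mod (m + 1))` matches the reduced
exponents with the conditions (derivative order, grid point). The conditions are independent by
the Chinese remainder theorem, so the Taylor-data map from reduced polynomials is onto a space of
the same dimension, hence injective.
-/

namespace MvPolynomial

section Shift

variable {σ R : Type*} [CommRing R]

noncomputable def shift (a : σ → R) : MvPolynomial σ R →ₐ[R] MvPolynomial σ R :=
  aeval fun i ↦ X i + C (a i)

@[simp]
lemma shift_X (a : σ → R) (i : σ) : shift a (X i) = X i + C (a i) :=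
  aeval_X _ _

lemma shift_shift_neg (a : σ → R) (p : MvPolynomial σ R) : shift a (shift (-a) p) = p := by
  suffices (shift a).comp (shift (-a)) = AlgHom.id R _ from congrArg (· p) this
  ext i
  simp

lemma constantCoeff_shift (a : σ → R) (p : MvPolynomial σ R) :
    constantCoeff (shift a p) = eval a p := by
  induction p using MvPolynomial.induction_on with
  | C c => simp [shift]
  | add p q hp hq => simp [hp, hq]
  | mul_X p i hp => simp [hp]

lemma pderiv_shift (a : σ → R) (i : σ) (p : MvPolynomial σ R) :
    pderiv i (shift a p) = shift a (pderiv i p) := by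
  classical
  induction p using MvPolynomial.induction_on with
  | C c => simp [shift]
  | add p q hp hq => simp [hp, hq]
  | mul_X p j hp =>
    by_cases hij : j = i <;> simp [Derivation.leibniz, hp, hij]

lemma shift_mem_pow_idealOfVars {a : σ → R} {p : MvPolynomial σ R} {r : ℕ}
    (hp : p ∈ RingHom.ker (eval a) ^ r) : shift a p ∈ idealOfVars σ R ^ r := by
  have hker : RingHom.ker (eval a) ≤ (idealOfVars σ R).comap (shift a) := fun q hq ↦ by
    rw [Ideal.mem_comap, ← pow_one (idealOfVars σ R), mem_pow_idealOfVars_iff']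
    intro e he
    rw [Nat.lt_one_iff, Finsupp.degree_eq_zero_iff] at he
    rw [he, ← constantCoeff_eq, constantCoeff_shift]
    exact hq
  exact Ideal.le_comap_pow _ r (Ideal.pow_right_mono hker r hp)

lemma coeff_shift_eq_of_sub_mem {a : σ → R} {p p' : MvPolynomial σ R} {r : ℕ}
    (h : p - p' ∈ RingHom.ker (eval a) ^ r) {e : σ →₀ ℕ} (he : e.degree < r) :
    coeff e (shift a p) = coeff e (shift a p') := by
  have := (mem_pow_idealOfVars_iff' r _).1 (shift_mem_pow_idealOfVars h) e he
  rwa [map_sub, coeff_sub, sub_eq_zero] at this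

end Shift

lemma isCoprime_ker_eval {σ K : Type*} [Field K] {x y : σ → K} (h : x ≠ y) :
    IsCoprime (RingHom.ker (eval x)) (RingHom.ker (eval y)) := by
  obtain ⟨i, hi⟩ := Function.ne_iff.1 h
  rw [Ideal.isCoprime_iff_sup_eq]
  have hC : C (y i - x i) = (X i - C (x i)) - (X i - C (y i)) := by simp
  refine Ideal.eq_top_of_isUnit_mem _ ?_ ((sub_ne_zero.2 hi.symm).isUnit.map C)
  rw [hC]
  exact sub_mem (Ideal.mem_sup_left (by simp)) (Ideal.mem_sup_right (by simp))

section Taylor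

variable {σ R : Type*} [CommSemiring R]

lemma coeff_iterate_pderiv (i : σ) (t : ℕ) (e : σ →₀ ℕ) (p : MvPolynomial σ R) :
    coeff e ((fun q ↦ pderiv i q)^[t] p)
      = coeff (e + Finsupp.single i t) p * ((e i + t).descFactorial t : R) := by
  induction t generalizing p with
  | zero => simp
  | succ t ih =>
    rw [Function.iterate_succ_apply, ih, coeff_pderiv, ← add_assoc (e i),
      Nat.succ_descFactorial_succ, add_assoc e, ← Finsupp.single_add]
    simp only [Finsupp.add_apply, Finsupp.single_eq_same]
    push_cast
    ring

lemma coeff_foldl_iterate_pderiv [DecidableEq σ] (d : σ → ℕ) {l : List σ} (hl : l.Nodup)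
    (e : σ →₀ ℕ) (p : MvPolynomial σ R) :
    coeff e (l.foldl (fun q i ↦ (fun r ↦ pderiv i r)^[d i] q) p)
      = coeff (e + ∑ i ∈ l.toFinset, Finsupp.single i (d i)) p
          * ∏ i ∈ l.toFinset, ((e i + d i).descFactorial (d i) : R) := by
  induction l generalizing p with
  | nil => simp
  | cons i l ih =>
    obtain ⟨hi, hl⟩ := List.nodup_cons.mp hl
    have hi' : i ∉ l.toFinset := by simpa using hi
    rw [List.foldl_cons, ih hl, coeff_iterate_pderiv, List.toFinset_cons,
      Finset.sum_insert hi', Finset.prod_insert hi']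
    have : (∑ j ∈ l.toFinset, Finsupp.single j (d j)) i = 0 := by
      simp [Finsupp.finsetSum_apply, Finsupp.single_apply, hi]
    simp only [Finsupp.add_apply, this, add_zero, add_assoc, add_comm (Finsupp.single i (d i))]
    ring

end Taylor

section LeadingMonomial

variable {σ R : Type*} [CommRing R]

variable (σ R) in
noncomputable def restrictTotalDegreeLT (s : ℕ) : Submodule R (MvPolynomial σ R) :=
  restrictSupport R {e | e.degree < s}

lemma mem_restrictTotalDegreeLT_succ {p : MvPolynomial σ R} {D : ℕ} :
    p ∈ restrictTotalDegreeLT σ R (D + 1) ↔ p.totalDegree ≤ D := by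
  rw [← mem_restrictTotalDegree, restrictTotalDegreeLT, restrictTotalDegree]
  simp only [Nat.lt_add_one_iff]
  rfl

lemma mul_mem_restrictTotalDegreeLT {p q : MvPolynomial σ R} {a b : ℕ}
    (hp : p ∈ restrictTotalDegreeLT σ R a) (hq : q.totalDegree ≤ b) :
    p * q ∈ restrictTotalDegreeLT σ R (a + b) := by
  have hpq := Submodule.mul_mem_mul hp ((mem_restrictTotalDegree _ _ q).2 hq)
  rw [restrictTotalDegreeLT, restrictTotalDegree, ← restrictSupport_add] at hpq
  refine restrictSupport_mono R ?_ hpq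
  rintro _ ⟨x, hx, y, hy, rfl⟩
  have hy' : y.degree ≤ b := hy
  simp only [Set.mem_ofPred_eq, map_add] at hx ⊢
  omega

def HasLeadingMonomial (p : MvPolynomial σ R) (u : σ →₀ ℕ) : Prop :=
  p - monomial u 1 ∈ restrictTotalDegreeLT σ R u.degree

lemma hasLeadingMonomial_monomial (u : σ →₀ ℕ) : HasLeadingMonomial (monomial u (1 : R)) u := by
  simp [HasLeadingMonomial]

lemma hasLeadingMonomial_X_sub_C (i : σ) (c : R) :
    HasLeadingMonomial (X i - C c) (Finsupp.single i 1) := by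
  rw [HasLeadingMonomial, X, sub_sub_cancel_left, neg_mem_iff, C_apply, restrictTotalDegreeLT,
    monomial_mem_restrictSupport]
  simp

lemma HasLeadingMonomial.totalDegree_le {p : MvPolynomial σ R} {u : σ →₀ ℕ}
    (h : HasLeadingMonomial p u) : p.totalDegree ≤ u.degree := by
  have h' : p - monomial u 1 ∈ restrictTotalDegreeLT σ R (u.degree + 1) :=
    restrictSupport_mono R (fun _ he ↦ Nat.lt_succ_of_lt he) h
  rw [mem_restrictTotalDegreeLT_succ] at h'
  calc p.totalDegree = (monomial u 1 + (p - monomial u 1)).totalDegree := by rw [add_sub_cancel]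
    _ ≤ u.degree := (totalDegree_add _ _).trans (max_le (totalDegree_monomial_le u 1) h')

lemma HasLeadingMonomial.mul {p q : MvPolynomial σ R} {u v : σ →₀ ℕ}
    (hp : HasLeadingMonomial p u) (hq : HasLeadingMonomial q v) :
    HasLeadingMonomial (p * q) (u + v) := by
  have hsplit : p * q - monomial (u + v) 1
      = (p - monomial u 1) * q + (q - monomial v 1) * monomial u 1 := by
    rw [show monomial (u + v) (1 : R) = monomial u 1 * monomial v 1 by
      rw [monomial_mul, one_mul]]
    ring
  rw [HasLeadingMonomial, hsplit, map_add]
  refine add_mem (mul_mem_restrictTotalDegreeLT hp hq.totalDegree_le) ?_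
  rw [add_comm u.degree]
  exact mul_mem_restrictTotalDegreeLT hq (totalDegree_monomial_le u 1)

lemma HasLeadingMonomial.prod {ι : Type*} (s : Finset ι) {p : ι → MvPolynomial σ R}
    {u : ι → σ →₀ ℕ} (h : ∀ i ∈ s, HasLeadingMonomial (p i) (u i)) :
    HasLeadingMonomial (∏ i ∈ s, p i) (∑ i ∈ s, u i) := by
  classical
  induction s using Finset.induction_on with
  | empty => simpa using hasLeadingMonomial_monomial (R := R) (0 : σ →₀ ℕ)
  | insert i s hi ih =>
    rw [Finset.prod_insert hi, Finset.sum_insert hi]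
    exact (h i (s.mem_insert_self i)).mul (ih fun j hj ↦ h j (Finset.mem_insert_of_mem hj))

lemma HasLeadingMonomial.pow {p : MvPolynomial σ R} {u : σ →₀ ℕ} (h : HasLeadingMonomial p u)
    (t : ℕ) : HasLeadingMonomial (p ^ t) (t • u) := by
  simpa using HasLeadingMonomial.prod (Finset.range t) fun _ _ ↦ h

lemma hasLeadingMonomial_prod_X_sub_C {ι : Type*} (i : σ) (s : Finset ι) (c : ι → R) :
    HasLeadingMonomial (∏ j ∈ s, (X i - C (c j))) (Finsupp.single i s.card) := by
  simpa using HasLeadingMonomial.prod s fun j _ ↦ hasLeadingMonomial_X_sub_C i (c j)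

end LeadingMonomial

end MvPolynomial

variable {n : ℕ}

lemma eval_pderivMulti (a : Fin n → ℝ) (d : Fin n → ℕ) (P : MvPolynomial (Fin n) ℝ) :
    eval a (pderivMulti d P)
      = coeff (Finsupp.equivFunOnFinite.symm d) (shift a P) * ∏ i, ((d i).factorial : ℝ) := by
  have hcomm (i : Fin n) : Function.Commute (fun q ↦ pderiv i q) (shift a) :=
    fun q ↦ pderiv_shift a i q
  rw [← constantCoeff_shift, pderivMulti,
    ← List.foldl_hom (shift a) (g₂ := fun q i ↦ (fun r ↦ pderiv i r)^[d i] q)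
      fun q i ↦ (hcomm i).iterate_left (d i) q,
    constantCoeff_eq, coeff_foldl_iterate_pderiv d (List.nodup_finRange n)]
  simp [Nat.descFactorial_self, Finsupp.equivFunOnFinite_symm_eq_sum]

lemma vanishesToOrder_iff (P : MvPolynomial (Fin n) ℝ) (a : Fin n → ℝ) (r : ℕ) :
    VanishesToOrder P a r ↔ shift a P ∈ idealOfVars (Fin n) ℝ ^ r := by
  simp only [mem_pow_idealOfVars_iff', VanishesToOrder, eval_pderivMulti, Finsupp.degree_eq_sum]
  constructor
  · intro h e he
    have he := h e he
    rw [Finsupp.equivFunOnFinite_symm_coe] at he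
    exact (mul_eq_zero.mp he).resolve_right (by positivity)
  · intro h d hd
    rw [h _ hd, zero_mul]

lemma exists_card_fiber_le_iff {ι : Type*} [Fintype ι] [DecidableEq ι] (q : ι → ℕ) (k : ℕ) :
    (∃ f : Fin k → ι, ∀ i, (Finset.univ.filter fun j ↦ f j = i).card ≤ q i) ↔ k ≤ ∑ i, q i := by
  constructor
  · rintro ⟨f, hf⟩
    calc k = ∑ i, (Finset.univ.filter fun j ↦ f j = i).card := by
          simpa using Finset.card_eq_sum_card_fiberwise (f := f) (s := .univ) (t := .univ) (by simp)
      _ ≤ ∑ i, q i := Finset.sum_le_sum fun i _ ↦ hf i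
  · intro hk
    -- enumerate `k` distinct elements of `{(i, j) | j < q i}` and keep their first coordinates
    let T : Finset (Σ _ : ι, ℕ) := Finset.univ.sigma fun i ↦ Finset.range (q i)
    have hT : k ≤ T.card := by simpa [T, Finset.card_sigma] using hk
    let e : Fin k ↪ T := (Fin.castLEEmb hT).trans T.equivFin.symm.toEmbedding
    refine ⟨fun j ↦ (e j).1.1, fun i ↦ ?_⟩
    calc _ ≤ (Finset.range (q i)).card := by
          refine Finset.card_le_card_of_injOn (fun j ↦ (e j).1.2) (fun j hj ↦ ?_) ?_
          · have hmem := (e j).2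
            simp only [Finset.coe_filter, Finset.mem_univ, true_and, Set.mem_ofPred_eq] at hj
            simp only [T, Finset.mem_sigma, Finset.mem_univ, true_and, Finset.mem_range, hj] at hmem
            simpa using hmem
          · intro j hj j' hj' h
            simp only [Finset.coe_filter, Finset.mem_univ, true_and, Set.mem_ofPred_eq] at hj hj'
            exact e.injective (Subtype.ext (Sigma.ext (hj.trans hj'.symm) (heq_of_eq h)))
      _ = q i := Finset.card_range _

namespace GridReduction

def reducedExps (m k n : ℕ) : Set (Fin n →₀ ℕ) :=
  {d | ∑ i, d i / (m + 1) < k ∧ d.degree ≤ m * n + (m + 1) * (k - 1) - 1}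

instance (m k n : ℕ) : Finite (reducedExps m k n) :=
  (Finsupp.finite_of_degree_le _).subset fun _ hd ↦ hd.2

lemma isMKReduced_iff {m k : ℕ} {P : MvPolynomial (Fin n) ℝ} :
    IsMKReduced m k n P ↔ P ∈ restrictSupport ℝ (reducedExps m k n) := by
  have hfiber (d : Fin n →₀ ℕ) : (∃ f : Fin k → Fin n,
      ∀ i, (m + 1) * (Finset.univ.filter fun j ↦ f j = i).card ≤ d i)
        ↔ k ≤ ∑ i, d i / (m + 1) := by
    simp_rw [← exists_card_fiber_le_iff, Nat.le_div_iff_mul_le m.succ_pos, mul_comm]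
  simp only [IsMKReduced, totalDegree, Finset.sup_le_iff, mem_restrictSupport_iff,
    Set.subset_def, Finset.mem_coe, reducedExps, Set.mem_ofPred_eq, hfiber, not_le]
  exact ⟨fun h d hd ↦ ⟨h.2 d hd, h.1 d hd⟩, fun h ↦ ⟨fun d hd ↦ (h d hd).2, fun d hd ↦ (h d hd).1⟩⟩

/-- The reduced exponent `d` encodes the condition that the Taylor coefficient of order
`condOrder m d` vanishes at the grid point `condPoint m d`. The residue `m` is sent to the
coordinate `0`, so the exponents attached to the origin are those with all residues equal to `m`. -/
noncomputable def condOrder (m : ℕ) (d : Fin n →₀ ℕ) : Fin n →₀ ℕ :=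
  d.mapRange (· / (m + 1)) (Nat.zero_div _)

def condPoint (m : ℕ) (d : Fin n →₀ ℕ) : Fin n → Fin (m + 1) :=
  fun i ↦ ⟨m - d i % (m + 1), by omega⟩

lemma degree_condOrder (m : ℕ) (d : Fin n →₀ ℕ) :
    (condOrder m d).degree = ∑ i, d i / (m + 1) := by
  simp [condOrder, Finsupp.degree_eq_sum]

lemma degree_eq_condOrder_add (m : ℕ) (d : Fin n →₀ ℕ) :
    d.degree = (m + 1) * (condOrder m d).degree + ∑ i, d i % (m + 1) := by
  simp only [Finsupp.degree_eq_sum, condOrder, Finsupp.mapRange_apply, Finset.mul_sum,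
    ← Finset.sum_add_distrib, Nat.div_add_mod]

lemma sum_mod_le (m : ℕ) (d : Fin n →₀ ℕ) : ∑ i, d i % (m + 1) ≤ m * n := by
  calc ∑ i, d i % (m + 1) ≤ ∑ _i : Fin n, m :=
        Finset.sum_le_sum fun i _ ↦ Nat.le_of_lt_succ (Nat.mod_lt (d i) (by omega))
    _ = m * n := by simp [mul_comm]

lemma eq_of_condPoint_eq_of_condOrder_eq {m : ℕ} {d d' : Fin n →₀ ℕ}
    (hp : condPoint m d = condPoint m d') (ho : condOrder m d = condOrder m d') : d = d' := by
  ext i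
  have h1 := congrArg Fin.val (congrFun hp i)
  have h2 := DFunLike.congr_fun ho i
  simp only [condPoint, condOrder, Finsupp.mapRange_apply] at h1 h2
  have := Nat.mod_lt (d i) (show 0 < m + 1 by omega)
  have := Nat.mod_lt (d' i) (show 0 < m + 1 by omega)
  rw [← Nat.div_add_mod (d i) (m + 1), ← Nat.div_add_mod (d' i) (m + 1), h2]
  omega

lemma condPoint_eq_zero_iff {m : ℕ} {d : Fin n →₀ ℕ} :
    condPoint m d = 0 ↔ ∀ i, d i % (m + 1) = m := by
  simp only [funext_iff, Fin.ext_iff, condPoint, Pi.zero_apply, Fin.val_zero]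
  exact forall_congr' fun i ↦ by have := Nat.mod_lt (d i) (show 0 < m + 1 by omega); omega

lemma degree_condOrder_lt {m k : ℕ} (hk : 2 ≤ k) {d : Fin n →₀ ℕ} (hd : d ∈ reducedExps m k n) :
    (condOrder m d).degree < if condPoint m d = 0 then k - 1 else k := by
  obtain ⟨hdiv, hdeg⟩ := hd
  rw [← degree_condOrder] at hdiv
  split_ifs with h0
  · have hmod : ∑ i, d i % (m + 1) = m * n := by
      simp [condPoint_eq_zero_iff.1 h0, mul_comm]
    rw [degree_eq_condOrder_add m d, hmod] at hdeg
    have : (m + 1) * (condOrder m d).degree < (m + 1) * (k - 1) := by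
      have : 1 ≤ (m + 1) * (k - 1) := Nat.mul_pos (by omega) (by omega)
      omega
    exact Nat.lt_of_mul_lt_mul_left this
  · exact hdiv

lemma div_mod_of_notMem_reducedExps {m k : ℕ} {d : Fin n →₀ ℕ} (hd : d ∉ reducedExps m k n)
    (hdiv : ∑ i, d i / (m + 1) < k) :
    ∑ i, d i / (m + 1) + 1 = k ∧ ∀ i, d i % (m + 1) = m := by
  have hdeg : ¬ d.degree ≤ m * n + (m + 1) * (k - 1) - 1 := fun h ↦ hd ⟨hdiv, h⟩
  rw [degree_eq_condOrder_add m d, degree_condOrder] at hdeg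
  have hq : (m + 1) * ∑ i, d i / (m + 1) ≤ (m + 1) * (k - 1) :=
    Nat.mul_le_mul_left _ (by omega)
  have hr := sum_mod_le m d
  have hq' : (m + 1) * ∑ i, d i / (m + 1) = (m + 1) * (k - 1) := by omega
  refine ⟨by have := Nat.eq_of_mul_eq_mul_left m.succ_pos hq'; omega, fun i ↦ ?_⟩
  have hall : ∑ i, d i % (m + 1) = ∑ _i : Fin n, m := by
    rw [Finset.sum_const, Finset.card_univ, Fintype.card_fin, smul_eq_mul, mul_comm]
    omega
  exact (Finset.sum_eq_sum_iff_of_le fun i _ ↦ Nat.le_of_lt_succ (Nat.mod_lt (d i) (by omega))).1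
    hall i (Finset.mem_univ i)

def gridPoint {m : ℕ} (a : Fin n → Fin (m + 1)) : Fin n → ℝ :=
  fun i ↦ ((a i : ℕ) : ℝ)

lemma gridPoint_injective (m : ℕ) : Function.Injective (gridPoint (n := n) (m := m)) :=
  fun _ _ h ↦ funext fun i ↦ Fin.ext (by simpa [gridPoint] using congrFun h i)

@[simp]
lemma gridPoint_zero (m : ℕ) : gridPoint (0 : Fin n → Fin (m + 1)) = 0 := by
  ext; simp [gridPoint]

noncomputable def gridIdeal (m k : ℕ) : Ideal (MvPolynomial (Fin n) ℝ) :=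
  ⨅ a : Fin n → Fin (m + 1), RingHom.ker (eval (gridPoint a)) ^ (if a = 0 then k - 1 else k)

def VanishesOnGrid (m k : ℕ) (Q : MvPolynomial (Fin n) ℝ) : Prop :=
  (∀ x : Fin n → ℝ, (∀ i, ∃ j : ℕ, j ≤ m ∧ x i = (j : ℝ)) → x ≠ 0 → VanishesToOrder Q x k) ∧
    VanishesToOrder Q 0 (k - 1)

lemma vanishesOnGrid_of_mem_gridIdeal {m k : ℕ} {Q : MvPolynomial (Fin n) ℝ}
    (hQ : Q ∈ gridIdeal m k) : VanishesOnGrid m k Q := by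
  have hvan (a : Fin n → Fin (m + 1)) :
      VanishesToOrder Q (gridPoint a) (if a = 0 then k - 1 else k) :=
    (vanishesToOrder_iff _ _ _).2 (shift_mem_pow_idealOfVars (Ideal.mem_iInf.1 hQ a))
  refine ⟨fun x hx hx0 ↦ ?_, by simpa using hvan 0⟩
  choose j hj hxj using hx
  let a : Fin n → Fin (m + 1) := fun i ↦ ⟨j i, by have := hj i; omega⟩
  have hxa : x = gridPoint a := funext hxj
  have ha : a ≠ 0 := by rintro h; exact hx0 (by rw [hxa, h, gridPoint_zero])
  simpa [ha, ← hxa] using hvan a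

noncomputable def gridPoly (m : ℕ) (i : Fin n) : MvPolynomial (Fin n) ℝ :=
  ∏ j ∈ Finset.range (m + 1), (X i - C (j : ℝ))

noncomputable def gridPolyPos (m : ℕ) (i : Fin n) : MvPolynomial (Fin n) ℝ :=
  ∏ j ∈ Finset.Icc 1 m, (X i - C (j : ℝ))

lemma hasLeadingMonomial_gridPoly (m : ℕ) (i : Fin n) :
    HasLeadingMonomial (gridPoly m i) (Finsupp.single i (m + 1)) := by
  unfold gridPoly
  simpa only [Finset.card_range] using
    hasLeadingMonomial_prod_X_sub_C i (Finset.range (m + 1)) (fun j : ℕ ↦ (j : ℝ))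

lemma hasLeadingMonomial_gridPolyPos (m : ℕ) (i : Fin n) :
    HasLeadingMonomial (gridPolyPos m i) (Finsupp.single i m) := by
  unfold gridPolyPos
  simpa only [Nat.card_Icc, Nat.add_sub_cancel] using
    hasLeadingMonomial_prod_X_sub_C i (Finset.Icc 1 m) (fun j : ℕ ↦ (j : ℝ))

lemma prod_gridPoly_pow_mem {m : ℕ} (a : Fin n → Fin (m + 1)) (q : Fin n → ℕ) :
    ∏ i, gridPoly m i ^ q i ∈ RingHom.ker (eval (gridPoint a)) ^ ∑ i, q i := by
  rw [← Finset.prod_pow_eq_pow_sum]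
  refine Ideal.prod_mem_prod fun i _ ↦ Ideal.pow_mem_pow ?_ _
  rw [RingHom.mem_ker, gridPoly, map_prod]
  exact Finset.prod_eq_zero (Finset.mem_range.2 (a i).isLt) (by simp [gridPoint])

lemma prod_gridPolyPos_mem {m : ℕ} {a : Fin n → Fin (m + 1)} (ha : a ≠ 0) :
    ∏ i, gridPolyPos m i ∈ RingHom.ker (eval (gridPoint a)) := by
  obtain ⟨i, hi⟩ := Function.ne_iff.1 ha
  refine Ideal.mem_of_dvd _ (Finset.dvd_prod_of_mem _ (Finset.mem_univ i)) ?_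
  rw [RingHom.mem_ker, gridPolyPos, map_prod]
  refine Finset.prod_eq_zero (i := (a i : ℕ)) ?_ (by simp [gridPoint])
  have := (a i).is_le
  have : (a i : ℕ) ≠ 0 := fun h ↦ hi (Fin.ext h)
  simp only [Finset.mem_Icc]
  omega

lemma exists_mem_gridIdeal_of_le_sum_div {m k : ℕ} {d : Fin n →₀ ℕ}
    (hd : k ≤ ∑ i, d i / (m + 1)) : ∃ B ∈ gridIdeal m k, HasLeadingMonomial B d := by
  obtain ⟨f, hf⟩ := (exists_card_fiber_le_iff _ k).2 hd
  set q : Fin n → ℕ := fun i ↦ (Finset.univ.filter fun j ↦ f j = i).card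
  have hq : ∑ i, q i = k := by
    simpa using
      (Finset.card_eq_sum_card_fiberwise (f := f) (s := .univ) (t := .univ) (by simp)).symm
  set u : Fin n →₀ ℕ := ∑ i, q i • Finsupp.single i (m + 1)
  have hu : u = Finsupp.equivFunOnFinite.symm fun i ↦ q i * (m + 1) := by
    simp only [u, Finsupp.smul_single, smul_eq_mul, Finsupp.equivFunOnFinite_symm_eq_sum]
  have hud : u ≤ d := fun i ↦ by
    rw [hu]
    exact (Nat.le_div_iff_mul_le (by omega)).1 (hf i)
  refine ⟨monomial (d - u) 1 * ∏ i, gridPoly m i ^ q i, ?_, ?_⟩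
  · refine Ideal.mem_iInf.2 fun a ↦ Ideal.mul_mem_left _ _ ?_
    refine Ideal.pow_le_pow_right ?_ (hq ▸ prod_gridPoly_pow_mem a q)
    split_ifs <;> omega
  · have := (hasLeadingMonomial_monomial (d - u)).mul
      (HasLeadingMonomial.prod Finset.univ fun i _ ↦ (hasLeadingMonomial_gridPoly m i).pow (q i))
    rwa [tsub_add_cancel_of_le hud] at this

lemma exists_mem_gridIdeal_of_mod_eq {m k : ℕ} {d : Fin n →₀ ℕ}
    (hq : ∑ i, d i / (m + 1) + 1 = k) (hr : ∀ i, d i % (m + 1) = m) :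
    ∃ B ∈ gridIdeal m k, HasLeadingMonomial B d := by
  refine ⟨∏ i, (gridPoly m i ^ (d i / (m + 1)) * gridPolyPos m i), ?_, ?_⟩
  · refine Ideal.mem_iInf.2 fun a ↦ ?_
    rw [Finset.prod_mul_distrib]
    split_ifs with ha
    · exact Ideal.mul_mem_right _ _ (by simpa [← hq] using prod_gridPoly_pow_mem a _)
    · rw [← hq, pow_succ]
      exact Ideal.mul_mem_mul (prod_gridPoly_pow_mem a _) (prod_gridPolyPos_mem ha)
  · convert HasLeadingMonomial.prod Finset.univ fun i _ ↦
      ((hasLeadingMonomial_gridPoly m i).pow (d i / (m + 1))).mul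
        (hasLeadingMonomial_gridPolyPos m i)
    simp only [Finsupp.smul_single, smul_eq_mul, ← Finsupp.single_add,
      ← Finsupp.equivFunOnFinite_symm_eq_sum]
    ext i
    have h := Nat.div_add_mod' (d i) (m + 1)
    rw [hr i] at h
    simpa using h.symm

lemma exists_mem_gridIdeal_hasLeadingMonomial {m k : ℕ} {d : Fin n →₀ ℕ}
    (hd : d ∉ reducedExps m k n) : ∃ B ∈ gridIdeal m k, HasLeadingMonomial B d := by
  by_cases hdiv : k ≤ ∑ i, d i / (m + 1)
  · exact exists_mem_gridIdeal_of_le_sum_div hdiv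
  · obtain ⟨hq, hr⟩ := div_mod_of_notMem_reducedExps hd (not_le.1 hdiv)
    exact exists_mem_gridIdeal_of_mod_eq hq hr

lemma restrictTotalDegreeLT_le_sup (m k D : ℕ) :
    restrictTotalDegreeLT (Fin n) ℝ D ≤ restrictSupport ℝ (reducedExps m k n) ⊓
      restrictTotalDegreeLT (Fin n) ℝ D ⊔ (gridIdeal m k).restrictScalars ℝ := by
  induction D using Nat.strong_induction_on with
  | _ D ih =>
  conv_lhs => rw [restrictTotalDegreeLT, restrictSupport_eq_span]
  rw [Submodule.span_le]
  rintro _ ⟨d, hdD, rfl⟩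
  dsimp only
  by_cases hd : d ∈ reducedExps m k n
  · exact Submodule.mem_sup_left ⟨by simp [hd], by simpa [restrictTotalDegreeLT] using hdD⟩
  · obtain ⟨B, hB, hlead⟩ := exists_mem_gridIdeal_hasLeadingMonomial hd
    have hmono : restrictTotalDegreeLT (Fin n) ℝ d.degree ≤ restrictTotalDegreeLT (Fin n) ℝ D :=
      restrictSupport_mono ℝ fun e (he : e.degree < d.degree) ↦ (he.trans hdD : e.degree < D)
    rw [← sub_sub_cancel B (monomial d 1)]
    exact sub_mem (Submodule.mem_sup_right hB)
      (sup_le_sup_right (inf_le_inf_left _ hmono) _ (ih _ hdD hlead))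

theorem exists_reduced_sub_mem_gridIdeal (m k : ℕ) (P : MvPolynomial (Fin n) ℝ) :
    ∃ P₀ ∈ restrictSupport ℝ (reducedExps m k n),
      P₀.totalDegree ≤ P.totalDegree ∧ P - P₀ ∈ gridIdeal m k := by
  obtain ⟨P₀, ⟨hP₀, hdeg⟩, Q, hQ, rfl⟩ := Submodule.mem_sup.1
    (restrictTotalDegreeLT_le_sup m k _ (mem_restrictTotalDegreeLT_succ.2 (le_refl P.totalDegree)))
  exact ⟨P₀, hP₀, mem_restrictTotalDegreeLT_succ.1 hdeg, by simpa using hQ⟩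

noncomputable def taylorCoeffs (m k n : ℕ) :
    MvPolynomial (Fin n) ℝ →ₗ[ℝ] (reducedExps m k n → ℝ) :=
  LinearMap.pi fun d ↦ lcoeff ℝ (condOrder m d) ∘ₗ (shift (gridPoint (condPoint m d))).toLinearMap

lemma taylorCoeffs_apply (m k : ℕ) (Q : MvPolynomial (Fin n) ℝ) (d : reducedExps m k n) :
    taylorCoeffs m k n Q d = coeff (condOrder m d) (shift (gridPoint (condPoint m d)) Q) :=
  rfl

lemma taylorCoeffs_eq_zero {m k : ℕ} (hk : 2 ≤ k) {Q : MvPolynomial (Fin n) ℝ}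
    (hQ : VanishesOnGrid m k Q) : taylorCoeffs m k n Q = 0 := by
  ext ⟨d, hd⟩
  have hvan : VanishesToOrder Q (gridPoint (condPoint m d))
      (if condPoint m d = 0 then k - 1 else k) := by
    split_ifs with h0
    · simpa [h0] using hQ.2
    · refine hQ.1 _ (fun i ↦ ⟨_, (condPoint m d i).is_le, rfl⟩) fun h ↦ h0 ?_
      exact gridPoint_injective m (h.trans (gridPoint_zero m).symm)
  rw [vanishesToOrder_iff, mem_pow_idealOfVars_iff'] at hvan
  exact hvan _ (degree_condOrder_lt hk hd)

lemma taylorCoeffs_surjective (m k n : ℕ) : Function.Surjective (taylorCoeffs m k n) := by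
  intro y
  have := Fintype.ofFinite (reducedExps m k n)
  -- by the Chinese remainder theorem, prescribe the Taylor expansion at each grid point
  let target (a : Fin n → Fin (m + 1)) : MvPolynomial (Fin n) ℝ := shift (-gridPoint a)
    (∑ d : reducedExps m k n, if condPoint m d = a then monomial (condOrder m d) (y d) else 0)
  obtain ⟨P, hP⟩ := Ideal.exists_forall_sub_mem_ideal
    (I := fun a ↦ RingHom.ker (eval (gridPoint a)) ^ k)
    (fun a b hab ↦ (isCoprime_ker_eval ((gridPoint_injective m).ne hab)).pow) target
  refine ⟨P, funext fun ⟨d, hd⟩ ↦ ?_⟩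
  rw [taylorCoeffs_apply, coeff_shift_eq_of_sub_mem (hP _) (degree_condOrder m d ▸ hd.1),
    shift_shift_neg, coeff_sum, Finset.sum_eq_single ⟨d, hd⟩]
  · simp
  · rintro ⟨d', hd'⟩ - hne
    split_ifs with h
    · rw [coeff_monomial, if_neg]
      exact fun h' ↦ hne (Subtype.ext (eq_of_condPoint_eq_of_condOrder_eq h h'))
    · exact coeff_zero _
  · simp

theorem eq_zero_of_taylorCoeffs_eq_zero {m k : ℕ} (hk : 2 ≤ k) {Q : MvPolynomial (Fin n) ℝ}
    (hQ : Q ∈ restrictSupport ℝ (reducedExps m k n)) (h : taylorCoeffs m k n Q = 0) : Q = 0 := by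
  have := Fintype.ofFinite (reducedExps m k n)
  let V := restrictSupport ℝ (reducedExps m k n)
  have : FiniteDimensional ℝ V := Module.Finite.of_basis (basisRestrictSupport ℝ _)
  let L := taylorCoeffs m k n ∘ₗ V.subtype
  have hsurj : Function.Surjective L := by
    intro y
    obtain ⟨P, rfl⟩ := taylorCoeffs_surjective m k n y
    obtain ⟨P₀, hP₀, -, hmem⟩ := exists_reduced_sub_mem_gridIdeal m k P
    refine ⟨⟨P₀, hP₀⟩, ?_⟩
    have := taylorCoeffs_eq_zero hk (vanishesOnGrid_of_mem_gridIdeal hmem)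
    rw [map_sub, sub_eq_zero] at this
    exact this.symm
  have hrank : Module.finrank ℝ V = Module.finrank ℝ (reducedExps m k n → ℝ) := by
    rw [Module.finrank_eq_card_basis (basisRestrictSupport ℝ _),
      Module.finrank_fintype_fun_eq_card]
  have hinj := (LinearMap.injective_iff_surjective_of_finrank_eq_finrank hrank).2 hsurj
  simpa using @hinj ⟨Q, hQ⟩ 0 (by simpa [L] using h)

end GridReduction

open GridReduction in
theorem stmt17_general (m k n : ℕ) (hk : 2 ≤ k)
    (P : MvPolynomial (Fin n) ℝ) :
    (∃! P₀ : MvPolynomial (Fin n) ℝ, IsMKReduced m k n P₀ ∧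
      (∀ x : Fin n → ℝ, (∀ i, ∃ j : ℕ, j ≤ m ∧ x i = (j : ℝ)) → x ≠ 0 →
        VanishesToOrder (P - P₀) x k) ∧
      VanishesToOrder (P - P₀) 0 (k - 1)) ∧
    (∀ P₀ : MvPolynomial (Fin n) ℝ, IsMKReduced m k n P₀ →
      (∀ x : Fin n → ℝ, (∀ i, ∃ j : ℕ, j ≤ m ∧ x i = (j : ℝ)) → x ≠ 0 →
        VanishesToOrder (P - P₀) x k) →
      VanishesToOrder (P - P₀) 0 (k - 1) →
      P₀.totalDegree ≤ P.totalDegree) := by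
  obtain ⟨P₀, hP₀, hdeg, hmem⟩ := exists_reduced_sub_mem_gridIdeal m k P
  have hgrid := vanishesOnGrid_of_mem_gridIdeal hmem
  have huniq (Q : MvPolynomial (Fin n) ℝ) (hQ : IsMKReduced m k n Q)
      (hQgrid : VanishesOnGrid m k (P - Q)) : Q = P₀ := by
    rw [← sub_eq_zero]
    refine eq_zero_of_taylorCoeffs_eq_zero hk (sub_mem (isMKReduced_iff.1 hQ) hP₀) ?_
    rw [← sub_sub_sub_cancel_left P₀ Q P, map_sub, taylorCoeffs_eq_zero hk hQgrid,
      taylorCoeffs_eq_zero hk hgrid, sub_zero]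
  refine ⟨⟨P₀, ⟨isMKReduced_iff.2 hP₀, hgrid⟩, fun Q hQ ↦ huniq Q hQ.1 hQ.2⟩,
    fun Q hQ h₁ h₂ ↦ ?_⟩
  rw [huniq Q hQ ⟨h₁, h₂⟩]
  exact hdeg

/-- for every `P` there is a unique `(m,k)`-reduced `P₀` such that
`P - P₀` vanishes to order at least `k` at all points of `{0,…,m}^n \ {0}` and to
order at least `k-1` at the origin; moreover `deg P₀ ≤ deg P`. -/
theorem stmt17 (m k n : ℕ) (hm : 1 ≤ m) (hk : 2 ≤ k) (hn : 1 ≤ n)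
    (P : MvPolynomial (Fin n) ℝ) :
    (∃! P₀ : MvPolynomial (Fin n) ℝ, IsMKReduced m k n P₀ ∧
      (∀ x : Fin n → ℝ, (∀ i, ∃ j : ℕ, j ≤ m ∧ x i = (j : ℝ)) → x ≠ 0 →
        VanishesToOrder (P - P₀) x k) ∧
      VanishesToOrder (P - P₀) 0 (k - 1)) ∧
    (∀ P₀ : MvPolynomial (Fin n) ℝ, IsMKReduced m k n P₀ →
      (∀ x : Fin n → ℝ, (∀ i, ∃ j : ℕ, j ≤ m ∧ x i = (j : ℝ)) → x ≠ 0 →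
        VanishesToOrder (P - P₀) x k) →
      VanishesToOrder (P - P₀) 0 (k - 1) →
      P₀.totalDegree ≤ P.totalDegree) :=
  stmt17_general m k n hk P
end
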